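/- arXiv:math/0010250 — 2 statements merged into one kernel-verified Lean document; each statement's English description precedes it below -/
import Mathlib

section
/- The monomials γ_1^{i_1} γ_2^{i_2} ⋯ γ_N^{i_N} with each i_k ∈ {0,1} form a vector space basis of the FRT–Clifford algebra Cl_N(q,c); in particular dim_ℂ Cl_N(q,c) = 2^N. -/
noncomputable section

namespace FRT

/-- The "dual" index `i' = N+1-i` (0-indexed: `N-1-i`). -/
def dual {N : ℕ} (i : Fin N) : Fin N := ⟨N - 1 - i.val, by have := i.2; omega⟩

/-- Generators of the free algebra. -/
def gen {N : ℕ} (i : Fin N) : FreeAlgebra ℂ (Fin N) := FreeAlgebra.ι ℂ i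

/-- The sum `∑_{k<i} q^{2k-2i+2} γ_k γ_{k'}` appearing in the defining relations. -/
def pairSum (N : ℕ) (q : ℂ) (i : Fin N) : FreeAlgebra ℂ (Fin N) :=
  ∑ k ∈ Finset.Iio i, (q ^ (2 * (k.val : ℤ) - 2 * (i.val : ℤ) + 2)) • (gen k * gen (dual k))

/-- The defining relations of the FRT–Clifford algebra `Cl_N(q,c)`. -/
inductive Rel (N : ℕ) (q c : ℂ) : FreeAlgebra ℂ (Fin N) → FreeAlgebra ℂ (Fin N) → Prop
  | sq (i : Fin N) (h : 2 * i.val + 1 ≠ N) : Rel N q c (gen i * gen i) 0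
  | swap (i j : Fin N) (hlt : i < j) (h : i.val + j.val + 1 ≠ N) :
      Rel N q c (gen j * gen i) ((-(q ^ 2)) • (gen i * gen j))
  | pair (i : Fin N) (h : 2 * i.val + 1 < N) :
      Rel N q c (gen (dual i) * gen i)
        (-(gen i * gen (dual i)) + (q ^ 2 - q⁻¹ ^ 2) • pairSum N q i +
          algebraMap ℂ _ (c ^ 2 * q ^ ((N : ℤ) - 2 * (i.val : ℤ) - 1) * (q + q⁻¹)))
  | middle (i : Fin N) (h : 2 * i.val + 1 = N) :
      Rel N q c (gen i * gen i) ((q - q⁻¹) • pairSum N q i + algebraMap ℂ _ (c ^ 2))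

/-- The FRT–Clifford algebra `Cl_N(q,c)`. -/
abbrev Cl (N : ℕ) (q c : ℂ) := RingQuot (Rel N q c)

/-- The generators `γ_i` of `Cl_N(q,c)`. -/
def γ (N : ℕ) (q c : ℂ) (i : Fin N) : Cl N q c :=
  RingQuot.mkAlgHom ℂ (Rel N q c) (gen i)

/-- Ordered product `γ_1 γ_2 ⋯ γ_m` of the first `m` generators. -/
def prodFirst (N : ℕ) (q c : ℂ) (m : ℕ) : Cl N q c :=
  (((List.finRange N).take m).map (γ N q c)).prod

/-- Ordered product `γ_{m+1} γ_{m+2} ⋯ γ_N` (0-indexed: indices `m,…,N-1`). -/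
def prodFrom (N : ℕ) (q c : ℂ) (m : ℕ) : Cl N q c :=
  (((List.finRange N).drop m).map (γ N q c)).prod

/-- The ordered monomial `γ_1^{i_1} ⋯ γ_N^{i_N}` for `i ∈ {0,1}^N`. -/
def monoB (N : ℕ) (q c : ℂ) (f : Fin N → Bool) : Cl N q c :=
  ((List.finRange N).map (fun i => if f i then γ N q c i else 1)).prod

/-- The ordered monomial `γ_1^{i_1} ⋯ γ_n^{i_n}` for `i ∈ {0,1}^n`, `n ≤ N`. -/
def monoLow (N : ℕ) (q c : ℂ) {n : ℕ} (h : n ≤ N) (f : Fin n → Bool) : Cl N q c :=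
  ((List.finRange n).map (fun j => if f j then γ N q c (Fin.castLE h j) else 1)).prod

/-- `z` is homogeneous of `∂_i`-degree `0`: it is fixed by every algebra endomorphism
rescaling `γ_i` by `t` and `γ_{i'}` by `t⁻¹`. -/
def DegZeroAt (N : ℕ) (q c : ℂ) (i : ℕ) (z : Cl N q c) : Prop :=
  ∀ t : ℂ, t ≠ 0 → ∀ f : Cl N q c →ₐ[ℂ] Cl N q c,
    (∀ j : Fin N, f (γ N q c j) =
      (if j.val = i then t else if j.val + i + 1 = N then t⁻¹ else 1) • γ N q c j) →
    f z = z

end FRT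

/-!
Spanning: the relations rewrite a product `γ_x γ_y` with `y ≤ x` as a combination of `1` and of
products `γ_a γ_b` with `a < x`. Rewriting a descent of a word therefore produces shorter words
and words that are smaller in the lexicographic order, so by well-founded induction in the
shortlex order every word is a combination of strictly increasing words, i.e. of the monomials.

Independence: `Cl_N(q,c)` acts on the functions on `{0,1}^N`, the states of `N` slots. For
`2i+1 < N` the generator `γ_i` creates a particle in slot `i` and `γ_{i'}` annihilates it with
weight the constant term of the relation for `γ_{i'} γ_i` (nonzero because `c ≠ 0` and
`q⁴ ≠ 1`); the middle generator flips its slot with weight `c`. Every operator carries the twist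
`(-q²)^(number of occupied lower slots)`, which produces the `q`-commutation relations, and the
remaining relations come down to a telescoping geometric sum in `q⁴`. A monomial maps each basis
vector to a multiple of a basis vector. For the source and target states attached to `g`, its
matrix coefficient is nonzero for the monomial of `g` and vanishes for the monomial of `h`
unless `h ≤ g`; a triangular family of this kind is linearly independent.
-/

open Finset

theorem List.prod_map_ite_one {α M : Type*} [Monoid M] (p : α → Prop) [DecidablePred p]
    (f : α → M) (l : List α) :
    (l.map fun a => if p a then f a else 1).prod = ((l.filter p).map f).prod := by
  induction l with
  | nil => rfl
  | cons a l ih => by_cases h : p a <;> simp [h, ih]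

theorem Finset.sum_card_filter_lt {α M : Type*} [LinearOrder α] [AddCommMonoid M]
    (s : Finset α) (f : ℕ → M) :
    ∑ k ∈ s, f #{l ∈ s | l < k} = ∑ j ∈ range #s, f j := by
  induction s using Finset.induction_on_max with
  | empty => simp
  | insert a s ha ih =>
    have has : a ∉ s := fun h => lt_irrefl a (ha a h)
    have hlt : {l ∈ insert a s | l < a} = s := by
      rw [filter_insert, if_neg (lt_irrefl a), filter_true_of_mem ha]
    rw [sum_insert has, card_insert_of_notMem has, sum_range_succ, add_comm, hlt, ← ih]
    congr 1
    refine sum_congr rfl fun k hk => ?_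
    rw [filter_insert, if_neg (not_lt.mpr (ha k hk).le)]

theorem LinearIndependent.of_triangular {ι R M : Type*} [CommRing R] [NoZeroDivisors R]
    [AddCommGroup M] [Module R M] [Fintype ι] [PartialOrder ι]
    (v : ι → M) (φ : ι → M →ₗ[R] R) (hdiag : ∀ i, φ i (v i) ≠ 0)
    (htri : ∀ i j, φ i (v j) ≠ 0 → j ≤ i) : LinearIndependent R v := by
  rw [Fintype.linearIndependent_iff]
  intro l hl i
  induction i using WellFoundedLT.induction with
  | ind i ih =>
    have hsum : ∑ j, l j * φ i (v j) = 0 := by simpa [map_sum] using congrArg (φ i) hl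
    rw [sum_eq_single i _ (by simp)] at hsum
    · exact (mul_eq_zero.mp hsum).resolve_right (hdiag i)
    intro j _ hji
    by_cases hφ : φ i (v j) = 0
    · rw [hφ, mul_zero]
    · rw [ih j (lt_of_le_of_ne (htri i j hφ) hji), zero_mul]

namespace FRT

section

variable {N : ℕ} {q c : ℂ}

lemma dual_val (i : Fin N) : (dual i).val = N - 1 - i.val := rfl

@[simp]
lemma dual_dual (i : Fin N) : dual (dual i) = i := by
  ext; simp only [dual_val]; omega

abbrev FockSpace (N : ℕ) := (Fin N → Bool) → ℂ

def flipSlot (a : Fin N) (T : Fin N → Bool) : Fin N → Bool := Function.update T a (!T a)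

def countBelow (a : Fin N) (T : Fin N → Bool) : ℕ := #{b ∈ Iio a | T b}

@[simp]
lemma flipSlot_apply_self (a : Fin N) (T : Fin N → Bool) : flipSlot a T a = !T a := by
  simp [flipSlot]

lemma flipSlot_apply_of_ne {a b : Fin N} (h : b ≠ a) (T : Fin N → Bool) :
    flipSlot a T b = T b := by
  simp [flipSlot, h]

@[simp]
lemma flipSlot_flipSlot (a : Fin N) (T : Fin N → Bool) : flipSlot a (flipSlot a T) = T := by
  ext b; by_cases hb : b = a <;> simp [flipSlot, Function.update_apply, hb]

lemma flipSlot_comm (a b : Fin N) (T : Fin N → Bool) :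
    flipSlot a (flipSlot b T) = flipSlot b (flipSlot a T) := by
  ext x
  by_cases hxa : x = a <;> by_cases hxb : x = b <;> simp_all [flipSlot, Function.update_apply]

lemma countBelow_flipSlot_of_le {a b : Fin N} (h : a ≤ b) (T : Fin N → Bool) :
    countBelow a (flipSlot b T) = countBelow a T := by
  unfold countBelow
  congr 1
  refine filter_congr fun x hx => ?_
  rw [flipSlot_apply_of_ne ((mem_Iio.mp hx).trans_le h).ne]

lemma countBelow_flipSlot_of_lt {a b : Fin N} (h : b < a) {T : Fin N → Bool} (hT : T b) :
    countBelow a (flipSlot b T) + 1 = countBelow a T := by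
  have : ({x ∈ Iio a | T x} : Finset _) = insert b {x ∈ Iio a | flipSlot b T x} := by
    ext x; by_cases hx : x = b <;> simp_all [flipSlot_apply_of_ne]
  rw [countBelow, countBelow, this, card_insert_of_notMem (by simp [hT])]

lemma sub_one_mul_sum_pow_countBelow {R : Type*} [CommRing R] (x : R) (T : Fin N → Bool)
    (i : Fin N) :
    (x - 1) * ∑ k ∈ Iio i, (if T k then x ^ countBelow k T else 0) =
      x ^ countBelow i T - 1 := by
  rw [← sum_filter (fun k => T k = true) (fun k => x ^ countBelow k T), countBelow,
    ← mul_geom_sum, ← sum_card_filter_lt _ fun j : ℕ => x ^ j]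
  congr 1
  refine sum_congr rfl fun k hk => ?_
  rw [countBelow]
  congr 2
  ext l
  simp only [mem_filter, mem_Iio] at hk ⊢
  exact ⟨fun ⟨hl, hTl⟩ => ⟨⟨hl.trans hk.1, hTl⟩, hl⟩,
    fun ⟨⟨_, hTl⟩, hl⟩ => ⟨hl, hTl⟩⟩

def fockOp (ω : ℂ) (a : Fin N) (x y : ℂ) : Module.End ℂ (FockSpace N) where
  toFun f T := ω ^ countBelow a T * (if T a then x else y) * f (flipSlot a T)
  map_add' f g := by ext T; simp [mul_add]
  map_smul' r f := by ext T; simp only [Pi.smul_apply, smul_eq_mul, RingHom.id_apply]; ring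

@[simp]
lemma fockOp_apply (ω : ℂ) (a : Fin N) (x y : ℂ) (f : FockSpace N) (T : Fin N → Bool) :
    fockOp ω a x y f T = ω ^ countBelow a T * (if T a then x else y) * f (flipSlot a T) := rfl

lemma fockOp_single (ω : ℂ) (a : Fin N) (x y : ℂ) (T : Fin N → Bool) :
    fockOp ω a x y (Pi.single T 1) =
      (ω ^ countBelow a T * if T a then y else x) • Pi.single (flipSlot a T) 1 := by
  ext X
  by_cases hX : X = flipSlot a T
  · subst hX; cases h : T a <;> simp [countBelow_flipSlot_of_le le_rfl, h]
  · have : flipSlot a X ≠ T := fun h => hX (by rw [← h, flipSlot_flipSlot])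
    simp [hX, this]

lemma fockOp_mul_fockOp_self (ω : ℂ) (a : Fin N) (x y x' y' : ℂ) :
    fockOp ω a x' y' * fockOp ω a x y = Algebra.lmul ℂ (FockSpace N)
      (fun T => ω ^ (2 * countBelow a T) * if T a then x' * y else y' * x) := by
  ext f T
  cases h : T a <;> simp [countBelow_flipSlot_of_le le_rfl, h] <;> ring

lemma fockOp_mul_creation_of_lt {ω : ℂ} {a b : Fin N} (hab : a < b) (x x' y' : ℂ) :
    fockOp ω b x' y' * fockOp ω a x 0 = ω • (fockOp ω a x 0 * fockOp ω b x' y') := by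
  ext f T
  by_cases hT : T a
  · have := countBelow_flipSlot_of_lt hab hT
    simp only [LinearMap.coe_comp, LinearMap.coe_single, Function.comp_apply,
      Module.End.mul_apply, fockOp_apply, LinearMap.coe_smul, Pi.smul_apply, smul_eq_mul,
      countBelow_flipSlot_of_le hab.le, flipSlot_apply_of_ne hab.ne, flipSlot_apply_of_ne hab.ne',
      flipSlot_comm a b, hT, ← this, pow_succ]
    split_ifs <;> ring
  · simp [hT, flipSlot_apply_of_ne hab.ne]

lemma annihilation_mul_fockOp_of_lt {ω : ℂ} {a b : Fin N} (hab : a < b) (y x' y' : ℂ) :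
    fockOp ω a 0 y * fockOp ω b x' y' = ω • (fockOp ω b x' y' * fockOp ω a 0 y) := by
  ext f T
  by_cases hT : T a
  · simp [hT, flipSlot_apply_of_ne hab.ne]
  · have := countBelow_flipSlot_of_lt hab (T := flipSlot a T) (by simpa using hT)
    rw [flipSlot_flipSlot] at this
    simp only [LinearMap.coe_comp, LinearMap.coe_single, Function.comp_apply,
      Module.End.mul_apply, fockOp_apply, LinearMap.coe_smul, Pi.smul_apply, smul_eq_mul,
      countBelow_flipSlot_of_le hab.le, flipSlot_apply_of_ne hab.ne, flipSlot_apply_of_ne hab.ne',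
      flipSlot_comm a b, hT, ← this, pow_succ]
    split_ifs <;> ring

def pairConst (q c : ℂ) (N k : ℕ) : ℂ := c ^ 2 * q ^ ((N : ℤ) - 2 * k - 1) * (q + q⁻¹)

def fockGen (q c : ℂ) (i : Fin N) : Module.End ℂ (FockSpace N) :=
  if 2 * i.val + 1 < N then fockOp (-q ^ 2) i 1 0
  else if 2 * i.val + 1 = N then fockOp (-q ^ 2) i c c
  else fockOp (-q ^ 2) (dual i) 0 (pairConst q c N (dual i))

lemma fockGen_of_lt {i : Fin N} (h : 2 * i.val + 1 < N) :
    fockGen q c i = fockOp (-q ^ 2) i 1 0 := if_pos h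

lemma fockGen_of_eq {i : Fin N} (h : 2 * i.val + 1 = N) :
    fockGen q c i = fockOp (-q ^ 2) i c c := by
  rw [fockGen, if_neg (by omega), if_pos h]

lemma fockGen_of_gt {i : Fin N} (h : N < 2 * i.val + 1) :
    fockGen q c i = fockOp (-q ^ 2) (dual i) 0 (pairConst q c N (dual i)) := by
  rw [fockGen, if_neg (by omega), if_neg (by omega)]

lemma fockGen_dual {i : Fin N} (h : 2 * i.val + 1 < N) :
    fockGen q c (dual i) = fockOp (-q ^ 2) i 0 (pairConst q c N i) := by
  rw [fockGen_of_gt (by rw [dual_val]; omega), dual_dual]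

lemma neg_sq_pow_two_mul (n : ℕ) : (-q ^ 2) ^ (2 * n) = (q ^ 4) ^ n := by
  rw [pow_mul]; ring

lemma fockGen_mul_self_of_ne {i : Fin N} (h : 2 * i.val + 1 ≠ N) :
    fockGen q c i * fockGen q c i = 0 := by
  rcases h.lt_or_gt with h | h
  · rw [fockGen_of_lt h, fockOp_mul_fockOp_self]
    convert map_zero (Algebra.lmul ℂ (FockSpace N)) using 2
    ext; simp
  · rw [fockGen_of_gt h, fockOp_mul_fockOp_self]
    convert map_zero (Algebra.lmul ℂ (FockSpace N)) using 2
    ext; simp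

lemma fockGen_swap {i j : Fin N} (hij : i < j) (h : i.val + j.val + 1 ≠ N) :
    fockGen q c j * fockGen q c i = (-q ^ 2) • (fockGen q c i * fockGen q c j) := by
  have hij' := Fin.lt_def.mp hij
  by_cases hj : 2 * j.val + 1 ≤ N
  · rw [fockGen_of_lt (i := i) (by omega)]
    rcases hj.lt_or_eq with hj | hj
    · rw [fockGen_of_lt hj]; exact fockOp_mul_creation_of_lt hij _ _ _
    · rw [fockGen_of_eq hj]; exact fockOp_mul_creation_of_lt hij _ _ _
  rw [fockGen_of_gt (i := j) (by omega)]
  rcases lt_trichotomy (2 * i.val + 1) N with hi | hi | hi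
  · rw [fockGen_of_lt hi]
    rcases lt_or_gt_of_ne (a := i.val) (b := (dual j).val) (by rw [dual_val]; omega) with hd | hd
    · exact fockOp_mul_creation_of_lt (Fin.lt_def.mpr hd) _ _ _
    · exact annihilation_mul_fockOp_of_lt (Fin.lt_def.mpr hd) _ _ _
  · rw [fockGen_of_eq hi]
    exact annihilation_mul_fockOp_of_lt (Fin.lt_def.mpr (by rw [dual_val]; omega)) _ _ _
  · rw [fockGen_of_gt hi]
    exact annihilation_mul_fockOp_of_lt (Fin.lt_def.mpr (by rw [dual_val, dual_val]; omega)) _ _ _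

lemma fockGen_mul_fockGen_dual {k : Fin N} (hk : 2 * k.val + 1 < N) :
    fockGen q c k * fockGen q c (dual k) = Algebra.lmul ℂ (FockSpace N)
      (fun T => (q ^ 4) ^ countBelow k T * if T k then pairConst q c N k else 0) := by
  rw [fockGen_of_lt hk, fockGen_dual hk, fockOp_mul_fockOp_self]
  congr 1; funext T; rw [neg_sq_pow_two_mul]; split_ifs <;> ring

lemma fockGen_dual_mul_fockGen {k : Fin N} (hk : 2 * k.val + 1 < N) :
    fockGen q c (dual k) * fockGen q c k = Algebra.lmul ℂ (FockSpace N)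
      (fun T => (q ^ 4) ^ countBelow k T * if T k then 0 else pairConst q c N k) := by
  rw [fockGen_of_lt hk, fockGen_dual hk, fockOp_mul_fockOp_self]
  congr 1; funext T; rw [neg_sq_pow_two_mul]; split_ifs <;> ring

lemma fockGen_mul_self_of_eq {i : Fin N} (h : 2 * i.val + 1 = N) :
    fockGen q c i * fockGen q c i =
      Algebra.lmul ℂ (FockSpace N) (fun T => (q ^ 4) ^ countBelow i T * c ^ 2) := by
  rw [fockGen_of_eq h, fockOp_mul_fockOp_self]
  congr 1; funext T; rw [neg_sq_pow_two_mul, ite_self]; ring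

lemma sub_inv_mul_sum_pairConst (hq : q ≠ 0) (T : Fin N → Bool) (i : Fin N) :
    (q - q⁻¹) * ∑ k ∈ Iio i, q ^ (2 * (k.val : ℤ) - 2 * (i.val : ℤ) + 2) *
        ((q ^ 4) ^ countBelow k T * if T k then pairConst q c N k else 0) =
      c ^ 2 * q ^ ((N : ℤ) - 2 * i.val - 1) * ((q ^ 4) ^ countBelow i T - 1) := by
  have hterm (k : Fin N) : q ^ (2 * (k.val : ℤ) - 2 * (i.val : ℤ) + 2) *
      ((q ^ 4) ^ countBelow k T * if T k then pairConst q c N k else 0) =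
        c ^ 2 * (q + q⁻¹) * q ^ ((N : ℤ) - 2 * i.val + 1) *
          if T k then (q ^ 4) ^ countBelow k T else 0 := by
    split_ifs
    · have : q ^ (2 * (k.val : ℤ) - 2 * (i.val : ℤ) + 2) * q ^ ((N : ℤ) - 2 * k.val - 1) =
          q ^ ((N : ℤ) - 2 * i.val + 1) := by rw [← zpow_add₀ hq]; ring_nf
      rw [pairConst, ← this]; ring
    · simp
  have hshift : q ^ ((N : ℤ) - 2 * i.val + 1) = q ^ ((N : ℤ) - 2 * i.val - 1) * q ^ 2 := by
    rw [← zpow_natCast, ← zpow_add₀ hq]; ring_nf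
  rw [sum_congr rfl fun k _ => hterm k, ← mul_sum, hshift]
  have hqq : q * q⁻¹ = 1 := mul_inv_cancel₀ hq
  linear_combination c ^ 2 * q ^ ((N : ℤ) - 2 * i.val - 1) *
      sub_one_mul_sum_pow_countBelow (q ^ 4) T i -
    c ^ 2 * q ^ ((N : ℤ) - 2 * i.val - 1) *
      (∑ k ∈ Iio i, if T k then (q ^ 4) ^ countBelow k T else 0) * (q * q⁻¹ + 1) * hqq

lemma lift_fockGen_pairSum {i : Fin N} (hi : 2 * i.val + 1 ≤ N) :
    FreeAlgebra.lift ℂ (fockGen q c) (pairSum N q i) = Algebra.lmul ℂ (FockSpace N)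
      (fun T => ∑ k ∈ Iio i, q ^ (2 * (k.val : ℤ) - 2 * (i.val : ℤ) + 2) *
        ((q ^ 4) ^ countBelow k T * if T k then pairConst q c N k else 0)) := by
  have hfun : (fun T => ∑ k ∈ Iio i, q ^ (2 * (k.val : ℤ) - 2 * (i.val : ℤ) + 2) *
      ((q ^ 4) ^ countBelow k T * if T k then pairConst q c N k else 0)) =
      ∑ k ∈ Iio i, q ^ (2 * (k.val : ℤ) - 2 * (i.val : ℤ) + 2) •
        fun T => (q ^ 4) ^ countBelow k T * if T k then pairConst q c N k else 0 := by
    ext T; simp [Finset.sum_apply]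
  rw [hfun, map_sum, pairSum, map_sum]
  refine sum_congr rfl fun k hk => ?_
  have hk : 2 * k.val + 1 < N := by simp only [mem_Iio, Fin.lt_def] at hk; omega
  rw [map_smul, map_smul, map_mul, gen, gen, FreeAlgebra.lift_ι_apply, FreeAlgebra.lift_ι_apply,
    fockGen_mul_fockGen_dual hk]

lemma lift_fockGen_rel (hq : q ≠ 0) {x y : FreeAlgebra ℂ (Fin N)} (h : Rel N q c x y) :
    FreeAlgebra.lift ℂ (fockGen q c) x = FreeAlgebra.lift ℂ (fockGen q c) y := by
  have hgen (i : Fin N) : FreeAlgebra.lift ℂ (fockGen q c) (gen i) = fockGen q c i :=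
    FreeAlgebra.lift_ι_apply _ _
  cases h with
  | sq i h => simpa [hgen] using fockGen_mul_self_of_ne h
  | swap i j hij h =>
    simp only [map_mul (FreeAlgebra.lift ℂ (fockGen q c)), map_smul, hgen]
    exact fockGen_swap hij h
  | pair i h =>
    simp only [map_add, map_neg, map_smul, AlgHom.commutes, hgen,
      map_mul (FreeAlgebra.lift ℂ (fockGen q c)), lift_fockGen_pairSum h.le,
      fockGen_dual_mul_fockGen h, fockGen_mul_fockGen_dual h]
    rw [← map_neg, ← map_smul, ← map_add,
      ← AlgHom.commutes (Algebra.lmul ℂ (FockSpace N)), ← map_add]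
    congr 1; funext T
    simp only [Pi.add_apply, Pi.neg_apply, Pi.smul_apply, smul_eq_mul, Pi.algebraMap_apply,
      Algebra.algebraMap_self, RingHom.id_apply]
    have hκ : pairConst q c N i = c ^ 2 * q ^ ((N : ℤ) - 2 * i.val - 1) * (q + q⁻¹) := rfl
    split_ifs <;>
      linear_combination (-(q + q⁻¹)) * sub_inv_mul_sum_pairConst (c := c) hq T i +
        (q ^ 4) ^ countBelow i T * hκ
  | middle i h =>
    simp only [map_add, map_smul, AlgHom.commutes, hgen,
      map_mul (FreeAlgebra.lift ℂ (fockGen q c)), lift_fockGen_pairSum h.le,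
      fockGen_mul_self_of_eq h]
    rw [← map_smul, ← AlgHom.commutes (Algebra.lmul ℂ (FockSpace N)), ← map_add]
    congr 1; funext T
    simp only [Pi.add_apply, Pi.smul_apply, smul_eq_mul, Pi.algebraMap_apply,
      Algebra.algebraMap_self, RingHom.id_apply]
    have hM : q ^ ((N : ℤ) - 2 * i.val - 1) = 1 := by
      rw [show (N : ℤ) - 2 * i.val - 1 = 0 by omega, zpow_zero]
    linear_combination -sub_inv_mul_sum_pairConst (c := c) hq T i -
      c ^ 2 * ((q ^ 4) ^ countBelow i T - 1) * hM

def fockRep (hq : q ≠ 0) : Cl N q c →ₐ[ℂ] Module.End ℂ (FockSpace N) :=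
  RingQuot.liftAlgHom ℂ
    ⟨FreeAlgebra.lift ℂ (fockGen q c), fun _ _ h => lift_fockGen_rel hq h⟩

lemma fockRep_γ (hq : q ≠ 0) (i : Fin N) : fockRep hq (γ N q c i) = fockGen q c i := by
  rw [fockRep, γ, RingQuot.liftAlgHom_mkAlgHom_apply, gen, FreeAlgebra.lift_ι_apply]

def slot (i : Fin N) : Fin N := if 2 * i.val + 1 ≤ N then i else dual i

def Admissible (i : Fin N) (X : Fin N → Bool) : Prop :=
  (2 * i.val + 1 < N → X i = false) ∧ (N < 2 * i.val + 1 → X (dual i) = true)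

lemma fockGen_single (hq : q ≠ 0) (hc : c ≠ 0) (hqq : q + q⁻¹ ≠ 0) (i : Fin N)
    (X : Fin N → Bool) :
    ∃ s : ℂ, fockGen q c i (Pi.single X 1) = s • Pi.single (flipSlot (slot i) X) 1 ∧
      (s ≠ 0 ↔ Admissible i X) := by
  have hω (a : Fin N) : (-q ^ 2) ^ countBelow a X ≠ 0 := pow_ne_zero _ (by simpa using hq)
  rcases lt_trichotomy (2 * i.val + 1) N with h | h | h
  · rw [show slot i = i from if_pos h.le, fockGen_of_lt h, fockOp_single]
    exact ⟨_, rfl, by simp [Admissible, h, hω, not_lt.mpr h.le]⟩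
  · rw [show slot i = i from if_pos h.le, fockGen_of_eq h, fockOp_single]
    exact ⟨_, rfl, by simp [Admissible, h, hω, hc]⟩
  · rw [show slot i = dual i from if_neg (by omega), fockGen_of_gt h, fockOp_single]
    have hκ : pairConst q c N (dual i) ≠ 0 :=
      mul_ne_zero (mul_ne_zero (pow_ne_zero _ hc) (zpow_ne_zero _ hq)) hqq
    exact ⟨_, rfl, by simp [Admissible, h, hω, hκ, not_lt.mpr h.le]⟩

/-- The state reached from `S` under the factors `γ_i`, `k ≤ i`, of the monomial of `h`
(applied from the right): slot `a` is flipped by `γ_a` if `2a+1 ≤ N` and by `γ_{a'}` if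
`2a+1 < N`. -/
def stateAfter (h : Fin N → Bool) (k : ℕ) (S : Fin N → Bool) (a : Fin N) : Bool :=
  xor (S a) (xor (if k ≤ a.val ∧ 2 * a.val + 1 ≤ N then h a else false)
    (if k ≤ N - 1 - a.val ∧ 2 * a.val + 1 < N then h (dual a) else false))

lemma stateAfter_of_le {k : ℕ} (hk : N ≤ k) (h S : Fin N → Bool) : stateAfter h k S = S := by
  ext a
  rw [stateAfter, if_neg (by omega), if_neg (by omega)]
  simp

lemma stateAfter_apply_slot (h S : Fin N → Bool) (i : Fin N) :
    stateAfter h i S (slot i) = xor (stateAfter h (i + 1) S (slot i)) (h i) := by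
  have := i.2
  by_cases hi : 2 * i.val + 1 ≤ N
  · have hA : i.val ≤ i.val ∧ 2 * i.val + 1 ≤ N := ⟨le_rfl, hi⟩
    have hA' : ¬(i.val + 1 ≤ i.val ∧ 2 * i.val + 1 ≤ N) := by omega
    have hB : (i.val ≤ N - 1 - i.val ∧ 2 * i.val + 1 < N) ↔
        (i.val + 1 ≤ N - 1 - i.val ∧ 2 * i.val + 1 < N) := by omega
    simp only [stateAfter, slot, if_pos hi, if_pos hA, if_neg hA', hB]
    generalize (if i.val + 1 ≤ N - 1 - i.val ∧ 2 * i.val + 1 < N then h (dual i) else false) = b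
    cases h i <;> cases b <;> simp
  · have hA : ¬(i.val ≤ (dual i).val ∧ 2 * (dual i).val + 1 ≤ N) := by rw [dual_val]; omega
    have hA' : ¬(i.val + 1 ≤ (dual i).val ∧ 2 * (dual i).val + 1 ≤ N) := by
      rw [dual_val]; omega
    have hB : i.val ≤ N - 1 - (dual i).val ∧ 2 * (dual i).val + 1 < N := by rw [dual_val]; omega
    have hB' : ¬(i.val + 1 ≤ N - 1 - (dual i).val ∧ 2 * (dual i).val + 1 < N) := by
      rw [dual_val]; omega
    simp only [stateAfter, slot, if_neg hi, if_neg hA, if_neg hA', if_pos hB, if_neg hB',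
      dual_dual]
    cases h i <;> simp

lemma stateAfter_apply_of_ne_slot (h S : Fin N → Bool) {i a : Fin N} (ha : a ≠ slot i) :
    stateAfter h i S a = stateAfter h (i + 1) S a := by
  have hai : a.val = i.val → N < 2 * i.val + 1 := fun he => by
    by_contra hi
    exact ha (by rw [slot, if_pos (by omega)]; exact Fin.ext he)
  have hadi : a.val = N - 1 - i.val → 2 * i.val + 1 ≤ N := fun he => by
    by_contra hi
    exact ha (by rw [slot, if_neg hi]; exact Fin.ext he)
  have hA : (i.val ≤ a.val ∧ 2 * a.val + 1 ≤ N) ↔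
      (i.val + 1 ≤ a.val ∧ 2 * a.val + 1 ≤ N) := by
    omega
  have hB : (i.val ≤ N - 1 - a.val ∧ 2 * a.val + 1 < N) ↔
      (i.val + 1 ≤ N - 1 - a.val ∧ 2 * a.val + 1 < N) := by
    omega
  simp only [stateAfter, hA, hB]

lemma stateAfter_step (h S : Fin N → Bool) (i : Fin N) :
    stateAfter h i S =
      if h i then flipSlot (slot i) (stateAfter h (i + 1) S) else stateAfter h (i + 1) S := by
  ext a
  by_cases ha : a = slot i
  · subst ha
    rw [stateAfter_apply_slot]
    cases h i <;> simp
  · rw [stateAfter_apply_of_ne_slot h S ha]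
    split_ifs <;> simp [flipSlot_apply_of_ne ha]

lemma forall_le_iff_succ {k : ℕ} (hk : k < N) {P : Fin N → Prop} :
    (∀ i : Fin N, k ≤ i.val → P i) ↔
      P ⟨k, hk⟩ ∧ ∀ i : Fin N, k + 1 ≤ i.val → P i := by
  refine ⟨fun H => ⟨H _ le_rfl, fun i hi => H i (by omega)⟩, fun ⟨H₀, H⟩ i hi => ?_⟩
  rcases hi.eq_or_lt with hi | hi
  · rwa [show i = ⟨k, hk⟩ from Fin.ext hi.symm]
  · exact H i hi

lemma prod_drop_fockGen_single (hq : q ≠ 0) (hc : c ≠ 0) (hqq : q + q⁻¹ ≠ 0)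
    (h S : Fin N → Bool) {k : ℕ} (hk : k ≤ N) :
    ∃ s : ℂ, (((List.finRange N).drop k).map fun i => if h i then fockGen q c i else 1).prod
        (Pi.single S 1) = s • Pi.single (stateAfter h k S) 1 ∧
      (s ≠ 0 ↔
        ∀ i : Fin N, k ≤ i.val → h i → Admissible i (stateAfter h (i + 1) S)) := by
  induction hk using Nat.decreasingInduction with
  | self =>
    refine ⟨1, by simp [List.drop_eq_nil_of_le, stateAfter_of_le le_rfl], ?_⟩
    simp only [ne_eq, one_ne_zero, not_false_eq_true, true_iff]
    intro i hi
    omega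
  | of_succ k hk ih =>
    obtain ⟨s, hs, hs0⟩ := ih
    rw [List.drop_eq_getElem_cons (by simpa using hk), List.map_cons, List.prod_cons,
      Module.End.mul_apply, hs, map_smul]
    have hget : (List.finRange N)[k]'(by simpa using hk) = ⟨k, hk⟩ := by simp
    rw [hget, forall_le_iff_succ hk, ← hs0, stateAfter_step h S ⟨k, hk⟩]
    by_cases hh : h ⟨k, hk⟩
    · obtain ⟨s', hs', hs'0⟩ := fockGen_single hq hc hqq ⟨k, hk⟩ (stateAfter h (k + 1) S)
      exact ⟨s * s', by simp [hh, hs', smul_smul], by simp [hh, ← hs'0, and_comm]⟩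
    · exact ⟨s, by simp [hh], by simp [hh]⟩

lemma stateAfter_zero_apply (h S : Fin N → Bool) (a : Fin N) :
    stateAfter h 0 S a = xor (S a) (xor (if 2 * a.val + 1 ≤ N then h a else false)
      (if 2 * a.val + 1 < N then h (dual a) else false)) := by
  simp [stateAfter]

lemma stateAfter_succ_apply_self (h S : Fin N → Bool) {i : Fin N} (hi : 2 * i.val + 1 < N) :
    stateAfter h (i + 1) S i = xor (S i) (h (dual i)) := by
  rw [stateAfter, if_neg (by omega), if_pos (by omega)]
  simp

lemma stateAfter_succ_apply_dual (h S : Fin N → Bool) {i : Fin N} (hi : N < 2 * i.val + 1) :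
    stateAfter h (i + 1) S (dual i) = S (dual i) := by
  rw [stateAfter, dual_val, if_neg (by omega), if_neg (by omega)]
  simp

/-- Slot `a < a'` starts occupied iff `γ_{a'}` occurs in the monomial of `g`, so that along the
monomial of `g` each annihilator finds its particle and each creator an empty slot. -/
def sourceState (g : Fin N → Bool) (a : Fin N) : Bool :=
  if 2 * a.val + 1 < N then g (dual a) else false

def targetState (g : Fin N → Bool) (a : Fin N) : Bool :=
  if 2 * a.val + 1 ≤ N then g a else false

lemma stateAfter_sourceState (g : Fin N → Bool) :
    stateAfter g 0 (sourceState g) = targetState g := by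
  ext a
  rw [stateAfter_zero_apply, sourceState, targetState]
  split_ifs <;> first | omega | cases g a <;> cases g (dual a) <;> rfl

lemma admissible_sourceState {g : Fin N → Bool} {i : Fin N} (hi : g i) :
    Admissible i (stateAfter g (i + 1) (sourceState g)) := by
  refine ⟨fun h => ?_, fun h => ?_⟩
  · rw [stateAfter_succ_apply_self _ _ h, sourceState, if_pos h, Bool.xor_self]
  · rw [stateAfter_succ_apply_dual _ _ h, sourceState, if_pos (by rw [dual_val]; omega),
      dual_dual, hi]

lemma le_of_stateAfter_sourceState {g h : Fin N → Bool}
    (hst : stateAfter h 0 (sourceState g) = targetState g)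
    (hadm : ∀ i, h i → Admissible i (stateAfter h (i + 1) (sourceState g))) : h ≤ g := by
  refine fun i => Bool.le_iff_imp.mpr fun hi => ?_
  have hsti := congrFun hst i
  rw [stateAfter_zero_apply, sourceState, targetState] at hsti
  obtain ⟨hlt, hgt⟩ := hadm i hi
  rcases lt_trichotomy (2 * i.val + 1) N with h' | h' | h'
  · have := hlt h'
    rw [stateAfter_succ_apply_self _ _ h', sourceState, if_pos h'] at this
    simp_all [h'.le]
  · simp_all
  · have := hgt h'
    rwa [stateAfter_succ_apply_dual _ _ h', sourceState, if_pos (by rw [dual_val]; omega),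
      dual_dual] at this

lemma fockRep_monoB (hq : q ≠ 0) (h : Fin N → Bool) :
    fockRep hq (monoB N q c h) =
      ((List.finRange N).map fun i => if h i then fockGen q c i else 1).prod := by
  rw [monoB, map_list_prod, List.map_map]
  refine congrArg _ (List.map_congr_left fun i _ => ?_)
  simp only [Function.comp_apply]
  split_ifs <;> simp [fockRep_γ]

def matrixCoeff (S U : Fin N → Bool) : Module.End ℂ (FockSpace N) →ₗ[ℂ] ℂ :=
  (LinearMap.proj U).comp (LinearMap.applyₗ (Pi.single S 1))

lemma linearIndependent_monoB (hq : q ≠ 0) (hc : c ≠ 0) (hqq : q + q⁻¹ ≠ 0) :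
    LinearIndependent ℂ (monoB N q c) := by
  refine .of_triangular _
    (fun g => (matrixCoeff (sourceState g) (targetState g)).comp (fockRep hq).toLinearMap) ?_ ?_
  · intro g
    obtain ⟨s, hs, hs0⟩ := prod_drop_fockGen_single hq hc hqq g (sourceState g) (Nat.zero_le N)
    rw [List.drop_zero] at hs
    simpa [matrixCoeff, fockRep_monoB, hs, stateAfter_sourceState] using
      hs0.mpr fun i _ hi => admissible_sourceState hi
  · intro g h hne
    obtain ⟨s, hs, hs0⟩ := prod_drop_fockGen_single hq hc hqq h (sourceState g) (Nat.zero_le N)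
    rw [List.drop_zero] at hs
    simp only [matrixCoeff, LinearMap.coe_comp, Function.comp_apply, AlgHom.toLinearMap_apply,
      fockRep_monoB, LinearMap.applyₗ_apply_apply, hs, LinearMap.proj_apply, Pi.smul_apply,
      Pi.single_apply, smul_eq_mul, mul_ite, mul_one, mul_zero, ne_eq, ite_eq_right_iff,
      not_forall] at hne
    obtain ⟨hst, hs⟩ := hne
    exact le_of_stateAfter_sourceState hst.symm fun i hi => hs0.mp hs i (Nat.zero_le _) hi

lemma γ_mul_self_of_ne {i : Fin N} (h : 2 * i.val + 1 ≠ N) : γ N q c i * γ N q c i = 0 := by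
  have := RingQuot.mkAlgHom_rel ℂ (Rel.sq (q := q) (c := c) i h)
  rwa [map_mul, map_zero] at this

lemma γ_mul_self_of_eq {i : Fin N} (h : 2 * i.val + 1 = N) :
    γ N q c i * γ N q c i =
      (q - q⁻¹) • RingQuot.mkAlgHom ℂ (Rel N q c) (pairSum N q i) +
        algebraMap ℂ _ (c ^ 2) := by
  have := RingQuot.mkAlgHom_rel ℂ (Rel.middle (q := q) (c := c) i h)
  rwa [map_mul, map_add, map_smul, AlgHom.commutes] at this

lemma γ_dual_mul_γ {i : Fin N} (h : 2 * i.val + 1 < N) :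
    γ N q c (dual i) * γ N q c i = -(γ N q c i * γ N q c (dual i)) +
      (q ^ 2 - q⁻¹ ^ 2) • RingQuot.mkAlgHom ℂ (Rel N q c) (pairSum N q i) +
      algebraMap ℂ _ (c ^ 2 * q ^ ((N : ℤ) - 2 * i.val - 1) * (q + q⁻¹)) := by
  have := RingQuot.mkAlgHom_rel ℂ (Rel.pair (q := q) (c := c) i h)
  rwa [map_mul, map_add, map_add, map_neg, map_mul, map_smul, AlgHom.commutes] at this

lemma γ_swap {i j : Fin N} (hij : i < j) (h : i.val + j.val + 1 ≠ N) :
    γ N q c j * γ N q c i = (-q ^ 2) • (γ N q c i * γ N q c j) := by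
  have := RingQuot.mkAlgHom_rel ℂ (Rel.swap (q := q) (c := c) i j hij h)
  rwa [map_mul, map_smul, map_mul] at this

variable (q c) in
abbrev lowerSpan (x : Fin N) : Submodule ℂ (Cl N q c) :=
  Submodule.span ℂ (insert 1 {z | ∃ a b : Fin N, a < x ∧ γ N q c a * γ N q c b = z})

lemma mkAlgHom_pairSum_mem_lowerSpan {i x : Fin N} (hix : i ≤ x) :
    RingQuot.mkAlgHom ℂ (Rel N q c) (pairSum N q i) ∈ lowerSpan q c x := by
  rw [pairSum, map_sum]
  refine Submodule.sum_mem _ fun k hk => ?_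
  rw [map_smul, map_mul]
  exact Submodule.smul_mem _ _ (Submodule.subset_span (Set.mem_insert_of_mem _
    ⟨k, dual k, (mem_Iio.mp hk).trans_le hix, rfl⟩))

lemma algebraMap_mem_lowerSpan (r : ℂ) (x : Fin N) :
    algebraMap ℂ (Cl N q c) r ∈ lowerSpan q c x := by
  rw [Algebra.algebraMap_eq_smul_one]
  exact Submodule.smul_mem _ _ (Submodule.subset_span (Set.mem_insert _ _))

lemma γ_mul_γ_mem_lowerSpan {x y : Fin N} (hyx : y ≤ x) :
    γ N q c x * γ N q c y ∈ lowerSpan q c x := by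
  have hmem {a b : Fin N} (hax : a < x) : γ N q c a * γ N q c b ∈ lowerSpan q c x :=
    Submodule.subset_span (Set.mem_insert_of_mem _ ⟨a, b, hax, rfl⟩)
  rcases hyx.eq_or_lt with rfl | hlt
  · by_cases hmid : 2 * y.val + 1 = N
    · rw [γ_mul_self_of_eq hmid]
      exact add_mem (Submodule.smul_mem _ _ (mkAlgHom_pairSum_mem_lowerSpan le_rfl))
        (algebraMap_mem_lowerSpan _ _)
    · rw [γ_mul_self_of_ne hmid]
      exact zero_mem _
  · by_cases hsum : y.val + x.val + 1 = N
    · have hy : 2 * y.val + 1 < N := by have := Fin.lt_def.mp hlt; omega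
      obtain rfl : x = dual y := Fin.ext (by rw [dual_val]; omega)
      rw [γ_dual_mul_γ hy]
      exact add_mem (add_mem (neg_mem (hmem hlt))
        (Submodule.smul_mem _ _ (mkAlgHom_pairSum_mem_lowerSpan hlt.le)))
        (algebraMap_mem_lowerSpan _ _)
    · rw [γ_swap hlt hsum]
      exact Submodule.smul_mem _ _ (hmem hlt)

def word (q c : ℂ) (l : List (Fin N)) : Cl N q c := (l.map (γ N q c)).prod

lemma word_append (u v : List (Fin N)) : word q c (u ++ v) = word q c u * word q c v := by
  simp [word]

lemma word_append_cons_cons (u v : List (Fin N)) (a b : Fin N) :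
    word q c (u ++ a :: b :: v) = word q c u * (γ N q c a * γ N q c b) * word q c v := by
  simp [word, mul_assoc]

lemma isChain_or_exists_descent (l : List (Fin N)) :
    l.IsChain (· < ·) ∨ ∃ u x y v, l = u ++ x :: y :: v ∧ y ≤ x := by
  induction l with
  | nil => exact .inl .nil
  | cons a t ih =>
    rcases t with _ | ⟨b, t⟩
    · exact .inl (.singleton a)
    by_cases hab : a < b
    · rcases ih with hch | ⟨u, x, y, v, heq, hyx⟩
      · exact .inl (.cons_cons hab hch)
      · exact .inr ⟨a :: u, x, y, v, by rw [heq]; rfl, hyx⟩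
    · exact .inr ⟨[], a, b, t, rfl, not_lt.mp hab⟩

lemma word_eq_monoB_of_isChain {l : List (Fin N)} (hl : l.IsChain (· < ·)) :
    word q c l = monoB N q c (· ∈ l) := by
  have hl' := List.isChain_iff_pairwise.mp hl
  have hfilter : (List.finRange N).filter (· ∈ l) = l := by
    have hsorted := (List.pairwise_lt_finRange N).filter (fun i => decide (i ∈ l))
    refine List.Perm.eq_of_pairwise (fun a b _ _ h₁ h₂ => absurd h₂ (lt_asymm h₁))
      hsorted hl' ?_
    rw [List.perm_ext_iff_of_nodup hsorted.nodup hl'.nodup]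
    simp
  rw [monoB, List.prod_map_ite_one]
  simp only [decide_eq_true_eq]
  rw [hfilter, word]

lemma word_mem_span_monoB (l : List (Fin N)) :
    word q c l ∈ Submodule.span ℂ (Set.range (monoB N q c)) := by
  induction l using (List.Shortlex.wf (α := Fin N) (r := (· < ·)) wellFounded_lt).induction with
  | h l ih =>
    rcases isChain_or_exists_descent l with hl | ⟨u, x, y, v, rfl, hyx⟩
    · rw [word_eq_monoB_of_isChain hl]
      exact Submodule.subset_span ⟨_, rfl⟩
    let f : Cl N q c →ₗ[ℂ] Cl N q c :=
      LinearMap.mulLeft ℂ (word q c u) ∘ₗ LinearMap.mulRight ℂ (word q c v)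
    have hf (z : Cl N q c) : f z = word q c u * z * word q c v := (mul_assoc _ _ _).symm
    suffices lowerSpan q c x ≤ (Submodule.span ℂ (Set.range (monoB N q c))).comap f by
      rw [word_append_cons_cons, ← hf]
      exact this (γ_mul_γ_mem_lowerSpan hyx)
    rw [Submodule.span_le]
    rintro _ (rfl | ⟨a, b, hax, rfl⟩)
    · rw [SetLike.mem_coe, Submodule.mem_comap, hf, mul_one, ← word_append]
      exact ih _ (.of_length_lt (by simp))
    · rw [SetLike.mem_coe, Submodule.mem_comap, hf, ← word_append_cons_cons]
      exact ih _ ((List.Shortlex.of_lex (s := a :: b :: v) (t := x :: y :: v) (by simp)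
        (.rel hax)).append_left u)

lemma span_range_word : Submodule.span ℂ (Set.range (word (N := N) q c)) = ⊤ := by
  have hγ : Set.range (γ N q c) =
      RingQuot.mkAlgHom ℂ (Rel N q c) '' Set.range (FreeAlgebra.ι ℂ) := by
    rw [← Set.range_comp]; rfl
  have hadjoin : Algebra.adjoin ℂ (Set.range (γ N q c)) = ⊤ := by
    rw [hγ, Algebra.adjoin_image, FreeAlgebra.adjoin_range_ι, Algebra.map_top,
      AlgHom.range_eq_top]
    exact RingQuot.mkAlgHom_surjective ℂ _
  have hclosure : (Submonoid.closure (Set.range (γ N q c)) : Set (Cl N q c)) =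
      Set.range (word q c) := by
    rw [← FreeMonoid.mrange_lift]
    ext z
    simp only [SetLike.mem_coe, MonoidHom.mem_mrange, FreeMonoid.lift_apply, Set.mem_range, word]
    exact ⟨fun ⟨m, hm⟩ => ⟨m.toList, hm⟩,
      fun ⟨l, hl⟩ => ⟨FreeMonoid.ofList l, hl⟩⟩
  rw [← hclosure, ← Algebra.adjoin_eq_span, hadjoin, Algebra.top_toSubmodule]

end

theorem monomials_form_basis_general (N : ℕ) (q c : ℂ)
    (hq : q ≠ 0) (hqr : ∀ m : ℕ, 0 < m → q ^ m ≠ 1) (hc : c ≠ 0) :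
    (∃ b : Module.Basis (Fin N → Bool) ℂ (Cl N q c), ∀ f, b f = monoB N q c f) ∧
    Module.rank ℂ (Cl N q c) = 2 ^ N := by
  have hqq : q + q⁻¹ ≠ 0 := by
    intro h
    have hsq : q ^ 2 = -1 := by field_simp at h; linear_combination h
    exact hqr 4 (by norm_num) (by linear_combination (q ^ 2 - 1) * hsq)
  have hli : LinearIndependent ℂ (monoB N q c) := linearIndependent_monoB hq hc hqq
  have hsp : ⊤ ≤ Submodule.span ℂ (Set.range (monoB N q c)) := by
    rw [← span_range_word (q := q) (c := c), Submodule.span_le]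
    rintro _ ⟨l, rfl⟩
    exact word_mem_span_monoB l
  let b := Module.Basis.mk hli hsp
  refine ⟨⟨b, Module.Basis.mk_apply hli hsp⟩, ?_⟩
  rw [rank_eq_card_basis b]
  simp

/-- the ordered monomials `γ_1^{i_1}⋯γ_N^{i_N}`, `i_k ∈ {0,1}`, form a
vector space basis of `Cl_N(q,c)`; in particular `dim Cl_N(q,c) = 2^N`. -/
theorem monomials_form_basis (N : ℕ) (hN : 3 ≤ N) (q c : ℂ)
    (hq : q ≠ 0) (hqr : ∀ m : ℕ, 0 < m → q ^ m ≠ 1) (hc : c ≠ 0) :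
    (∃ b : Module.Basis (Fin N → Bool) ℂ (Cl N q c), ∀ f, b f = monoB N q c f) ∧
    Module.rank ℂ (Cl N q c) = 2 ^ N :=
  monomials_form_basis_general N q c hq hqr hc

end FRT
end
end

section
/- For N = 2n+1 and η ∈ {+1,-1}, let ρ_η = γ_1⋯γ_n(ηc + γ_{n+1})γ_{n+2}⋯γ_N in Cl_{2n+1}(q,c). Then ρ_η · γ_1γ_2⋯γ_n(ηc + γ_{n+1}) = 2η c^{2n+1} q^{n(n+1)} (q+q^{-1})^n · γ_1γ_2⋯γ_n(ηc + γ_{n+1}); in particular ρ_η² = 2η c^{2n+1} q^{n(n+1)} (q+q^{-1})^n ρ_η, so ρ_η is not nilpotent when c ≠ 0. -/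
noncomputable section

namespace FRT

/-- `ψ_η = γ_1⋯γ_n(ηc + γ_{n+1})` in `Cl_{2n+1}(q,c)`. -/
def psiOdd (n : ℕ) (q c η : ℂ) : Cl (2 * n + 1) q c :=
  prodFirst (2 * n + 1) q c n *
    (algebraMap ℂ (Cl (2 * n + 1) q c) (η * c) + γ (2 * n + 1) q c ⟨n, by omega⟩)

/-- `ρ_η = γ_1⋯γ_n(ηc + γ_{n+1})γ_{n+2}⋯γ_N` in `Cl_{2n+1}(q,c)`. -/
def rhoOdd (n : ℕ) (q c η : ℂ) : Cl (2 * n + 1) q c :=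
  psiOdd n q c η * prodFrom (2 * n + 1) q c (n + 1)

-- stage 1: relation lemmas in Cl

variable {n : ℕ} (q c : ℂ)

theorem gam_sq (i : Fin (2*n+1)) (h : 2*i.val+1 ≠ 2*n+1) :
    γ (2*n+1) q c i * γ (2*n+1) q c i = 0 := by
  have := RingQuot.mkAlgHom_rel ℂ (Rel.sq (N := 2*n+1) (q := q) (c := c) i h)
  simpa [γ, map_mul] using this

theorem gam_swap (i j : Fin (2*n+1)) (hlt : i < j) (h : i.val + j.val + 1 ≠ 2*n+1) :
    γ (2*n+1) q c j * γ (2*n+1) q c i = (-(q^2)) • (γ (2*n+1) q c i * γ (2*n+1) q c j) := by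
  have := RingQuot.mkAlgHom_rel ℂ (Rel.swap (N := 2*n+1) (q := q) (c := c) i j hlt h)
  rw [map_mul, map_smul, map_mul] at this
  show _ = _
  simp only [γ, this, neg_smul]

/-- image of pairSum -/
theorem map_pairSum (i : Fin (2*n+1)) :
    RingQuot.mkAlgHom ℂ (Rel (2*n+1) q c) (pairSum (2*n+1) q i) =
      ∑ k ∈ Finset.Iio i, (q ^ (2*(k.val:ℤ) - 2*(i.val:ℤ) + 2)) •
        (γ (2*n+1) q c k * γ (2*n+1) q c (dual k)) := by
  simp [pairSum, map_sum, map_smul, map_mul, γ]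

theorem gam_pair (i : Fin (2*n+1)) (h : 2*i.val+1 < 2*n+1) :
    γ (2*n+1) q c (dual i) * γ (2*n+1) q c i =
      -(γ (2*n+1) q c i * γ (2*n+1) q c (dual i)) +
      (q^2 - q⁻¹^2) • (∑ k ∈ Finset.Iio i, (q ^ (2*(k.val:ℤ) - 2*(i.val:ℤ) + 2)) •
        (γ (2*n+1) q c k * γ (2*n+1) q c (dual k))) +
      algebraMap ℂ _ (c^2 * q ^ (((2*n+1:ℕ):ℤ) - 2*(i.val:ℤ) - 1) * (q + q⁻¹)) := by
  have := RingQuot.mkAlgHom_rel ℂ (Rel.pair (N := 2*n+1) (q := q) (c := c) i h)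
  rw [map_mul, map_add, map_add, map_neg, map_mul, map_smul, map_pairSum,
    AlgHom.commutes] at this
  simpa [γ] using this

theorem gam_middle (i : Fin (2*n+1)) (h : 2*i.val+1 = 2*n+1) :
    γ (2*n+1) q c i * γ (2*n+1) q c i =
      (q - q⁻¹) • (∑ k ∈ Finset.Iio i, (q ^ (2*(k.val:ℤ) - 2*(i.val:ℤ) + 2)) •
        (γ (2*n+1) q c k * γ (2*n+1) q c (dual k))) +
      algebraMap ℂ _ (c^2) := by
  have := RingQuot.mkAlgHom_rel ℂ (Rel.middle (N := 2*n+1) (q := q) (c := c) i h)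
  rw [map_mul, map_add, map_smul, map_pairSum, AlgHom.commutes] at this
  simpa [γ] using this



-- stage 2: product recursions, Lemma A/B/C
variable {n : ℕ} (q c : ℂ)

theorem prodFirst_succ (m : ℕ) (hm : m < 2*n+1) :
    prodFirst (2*n+1) q c (m+1) = prodFirst (2*n+1) q c m * γ (2*n+1) q c ⟨m, hm⟩ := by
  unfold prodFirst
  have hlen : m < (List.finRange (2*n+1)).length := by simpa using hm
  rw [List.take_succ, List.getElem?_eq_getElem hlen]
  simp

theorem prodFrom_eq (m : ℕ) (hm : m < 2*n+1) :
    prodFrom (2*n+1) q c m = γ (2*n+1) q c ⟨m, hm⟩ * prodFrom (2*n+1) q c (m+1) := by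
  unfold prodFrom
  have hlen : m < (List.finRange (2*n+1)).length := by simpa using hm
  rw [List.drop_eq_getElem_cons hlen]
  simp

-- stage 3: Lemma A, B, C
theorem prodFirst_mul_gam (m : ℕ) (hm : m ≤ n) : ∀ k : Fin (2*n+1), k.val < m →
    prodFirst (2*n+1) q c m * γ (2*n+1) q c k = 0 := by
  induction m with
  | zero => exact fun k hk => absurd hk (by omega)
  | succ m ih =>
    intro k hk
    have hmN : m < 2*n+1 := by omega
    rw [prodFirst_succ q c m hmN, mul_assoc]
    rcases Nat.lt_succ_iff_lt_or_eq.mp hk with hlt | he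
    · rw [gam_swap q c k ⟨m, hmN⟩ (by simpa [Fin.lt_def] using hlt) (by simp; omega)]
      rw [mul_smul_comm, ← mul_assoc, ih (by omega) k hlt, zero_mul, smul_zero]
    · have : k = ⟨m, hmN⟩ := Fin.ext he
      subst this
      rw [gam_sq q c ⟨m, hmN⟩ (by simp; omega), mul_zero]

theorem psi_mul_gam (hn : 1 ≤ n) (η : ℂ) (k : Fin (2*n+1)) (hk : k.val < n) :
    psiOdd n q c η * γ (2*n+1) q c k = 0 := by
  have h0 := prodFirst_mul_gam q c n le_rfl k hk
  rw [psiOdd, mul_assoc, add_mul,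
    gam_swap q c k ⟨n, by omega⟩ (by simpa [Fin.lt_def] using hk) (by simp; omega),
    ← Algebra.smul_def, mul_add, mul_smul_comm, mul_smul_comm, ← mul_assoc, h0,
    smul_zero, zero_mul, smul_zero, add_zero]

theorem psi_mul_X (hn : 1 ≤ n) (η : ℂ) (hη2 : η * η = 1) :
    psiOdd n q c η * (algebraMap ℂ (Cl (2*n+1) q c) (η*c) + γ (2*n+1) q c ⟨n, by omega⟩) =
      (2*η*c) • psiOdd n q c η := by
  set g := γ (2*n+1) q c ⟨n, by omega⟩ with hg
  set a := algebraMap ℂ (Cl (2*n+1) q c) (η*c) with ha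
  set P := prodFirst (2*n+1) q c n with hP
  set Sg := (∑ k ∈ Finset.Iio (⟨n, by omega⟩ : Fin (2*n+1)),
        (q ^ (2*(k.val:ℤ) - 2*((⟨n, by omega⟩ : Fin (2*n+1)).val:ℤ) + 2)) •
          (γ (2*n+1) q c k * γ (2*n+1) q c (dual k))) with hSg
  have hPS : P * Sg = 0 := by
    rw [hSg, Finset.mul_sum]
    refine Finset.sum_eq_zero fun k hk => ?_
    have hk' : k.val < n := by simpa [Finset.mem_Iio, Fin.lt_def] using hk
    rw [mul_smul_comm, ← mul_assoc, prodFirst_mul_gam q c n le_rfl k hk', zero_mul, smul_zero]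
  have hgg : g * g = (q - q⁻¹) • Sg + algebraMap ℂ _ (c^2) := gam_middle q c ⟨n, by omega⟩ rfl
  have hga : g * a = (η*c) • g := by rw [ha, ← Algebra.commutes, ← Algebra.smul_def]
  have hag : a * g = (η*c) • g := by rw [ha, ← Algebra.smul_def]
  have haa : a * a = algebraMap ℂ _ (c^2) := by
    rw [ha, ← map_mul]; congr 1
    calc η*c*(η*c) = (η*η)*c^2 := by ring
    _ = c^2 := by rw [hη2]; ring
  have expand : psiOdd n q c η * (a + g) = P * (a*a) + P * (a*g) + P * (g*a) + P * (g*g) := by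
    rw [psiOdd, ← ha, ← hg, ← hP, mul_assoc]
    simp only [add_mul, mul_add]
    abel
  rw [expand, hgg, hga, hag, haa]
  simp only [mul_add, mul_smul_comm, hPS, smul_zero, zero_add]
  have hrhs : (2*η*c) • psiOdd n q c η = P * ((2*η*c) • a) + (2*η*c) • (P * g) := by
    rw [psiOdd, ← ha, ← hg, ← hP, mul_add, smul_add, mul_smul_comm]
  rw [hrhs]
  have h1 : P * ((2*η*c) • a) = P * algebraMap ℂ _ (c^2) + P * algebraMap ℂ _ (c^2) := by
    rw [← mul_add, ← map_add, ha, Algebra.smul_def, ← map_mul]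
    congr 2
    calc 2*η*c*(η*c) = 2*((η*η)*c^2) := by ring
    _ = c^2 + c^2 := by rw [hη2]; ring
  rw [h1, show (2*η*c : ℂ) = η*c + η*c from by ring, add_smul]
  abel

-- stage 4: Kmod and Lemma D
def Kmod (m : ℕ) : Submodule ℂ (Cl (2*n+1) q c) :=
  Submodule.span ℂ {x | ∃ (k : Fin (2*n+1)) (u : Cl (2*n+1) q c), k.val < m ∧ x = γ (2*n+1) q c k * u}

theorem Kmod_mono {m m' : ℕ} (h : m ≤ m') : Kmod q c (n := n) m ≤ Kmod q c m' :=
  Submodule.span_mono (fun x ⟨k, u, hk, hx⟩ => ⟨k, u, lt_of_lt_of_le hk h, hx⟩)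

theorem Kmod_mem_basic {m : ℕ} (k : Fin (2*n+1)) (u : Cl (2*n+1) q c) (hk : k.val < m) :
    γ (2*n+1) q c k * u ∈ Kmod q c (n := n) m :=
  Submodule.subset_span ⟨k, u, hk, rfl⟩

theorem Kmod_mul_right {m : ℕ} {x : Cl (2*n+1) q c} (hx : x ∈ Kmod q c (n := n) m)
    (y : Cl (2*n+1) q c) : x * y ∈ Kmod q c (n := n) m := by
  have : Kmod q c (n := n) m ≤ Submodule.comap (LinearMap.mulRight ℂ y) (Kmod q c (n := n) m) := by
    rw [Kmod, Submodule.span_le]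
    rintro x ⟨k, u, hk, rfl⟩
    simp only [SetLike.mem_coe, Submodule.mem_comap, LinearMap.mulRight_apply, mul_assoc]
    exact Kmod_mem_basic q c k (u * y) hk
  exact this hx

theorem Kmod_dual_mul {m : ℕ} (hm : m ≤ n) {x : Cl (2*n+1) q c} (hx : x ∈ Kmod q c (n := n) m) :
    γ (2*n+1) q c ⟨2*n-m, by omega⟩ * x ∈ Kmod q c (n := n) m := by
  have : Kmod q c (n := n) m ≤ Submodule.comap
      (LinearMap.mulLeft ℂ (γ (2*n+1) q c ⟨2*n-m, by omega⟩)) (Kmod q c (n := n) m) := by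
    rw [Kmod, Submodule.span_le]
    rintro x ⟨k, u, hk, rfl⟩
    simp only [SetLike.mem_coe, Submodule.mem_comap, LinearMap.mulLeft_apply]
    rw [← mul_assoc, gam_swap q c k ⟨2*n-m, by omega⟩ (by simp only [Fin.lt_def]; show k.val < 2*n-m; omega) (by show k.val + (2*n-m) + 1 ≠ 2*n+1; omega),
      smul_mul_assoc, mul_assoc]
    exact Submodule.smul_mem _ _ (Kmod_mem_basic q c k _ hk)
  exact this hx

theorem psi_mul_Kmod (hn : 1 ≤ n) (η : ℂ) {x : Cl (2*n+1) q c} (hx : x ∈ Kmod q c (n := n) n) :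
    psiOdd n q c η * x = 0 := by
  have : Kmod q c (n := n) n ≤ LinearMap.ker (LinearMap.mulLeft ℂ (psiOdd n q c η)) := by
    rw [Kmod, Submodule.span_le]
    rintro x ⟨k, u, hk, rfl⟩
    simp only [SetLike.mem_coe, LinearMap.mem_ker, LinearMap.mulLeft_apply]
    rw [← mul_assoc, psi_mul_gam q c hn η k hk, zero_mul]
  simpa using this hx

def betaC (n : ℕ) (q c : ℂ) : ℕ → ℂ
  | 0 => 1
  | m+1 => betaC n q c m * (c^2 * q^(2*(n-m)) * (q+q⁻¹))

set_option maxHeartbeats 1000000 in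
theorem lemD (m : ℕ) (hm : m ≤ n) :
    prodFrom (2*n+1) q c (2*n+1-m) * prodFirst (2*n+1) q c m
      - algebraMap ℂ (Cl (2*n+1) q c) (betaC n q c m) ∈ Kmod q c (n := n) m := by
  induction m with
  | zero =>
    have hd : (List.finRange (2*n+1)).drop (2*n+1) = [] := by
      apply List.drop_eq_nil_of_le; simp
    simp only [Nat.sub_zero, prodFrom, prodFirst, hd, List.take_zero, List.map_nil,
      List.prod_nil, one_mul, betaC, map_one, sub_self]
    exact Submodule.zero_mem _
  | succ m ih =>
    have hmn : m < n := hm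
    have ihm := ih (le_of_lt hmn)
    set β := betaC n q c m with hβ
    set E := prodFrom (2*n+1) q c (2*n+1-m) with hE
    set P := prodFirst (2*n+1) q c m with hP
    set j := E * P - algebraMap ℂ (Cl (2*n+1) q c) β with hjdef
    set gm : Cl (2*n+1) q c := γ (2*n+1) q c ⟨m, by omega⟩ with hgm
    set gdm : Cl (2*n+1) q c := γ (2*n+1) q c ⟨2*n-m, by omega⟩ with hgdm
    have e1 : prodFrom (2*n+1) q c (2*n+1-(m+1)) = gdm * E := by
      have h2 : 2*n+1-(m+1) = 2*n-m := by omega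
      have h3 : 2*n+1-m = 2*n-m+1 := by omega
      rw [hgdm, hE, h3, h2]
      exact prodFrom_eq q c (2*n-m) (by omega)
    have e2 : prodFirst (2*n+1) q c (m+1) = P * gm := prodFirst_succ q c m (by omega)
    rw [e1, e2]
    have e3 : gdm * E * (P * gm) = gdm * (algebraMap ℂ (Cl (2*n+1) q c) β + j) * gm := by
      rw [hjdef, add_sub_cancel, mul_assoc, mul_assoc, mul_assoc]
    rw [e3]
    have hdual : dual (⟨m, by omega⟩ : Fin (2*n+1)) = ⟨2*n-m, by omega⟩ := by
      apply Fin.ext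
      show 2*n+1-1-m = 2*n-m
      omega
    have hpair := gam_pair (n := n) q c ⟨m, by omega⟩ (by simp; omega)
    rw [hdual] at hpair
    set Sg := (∑ k ∈ Finset.Iio (⟨m, by omega⟩ : Fin (2*n+1)),
        (q ^ (2*(k.val:ℤ) - 2*(((⟨m, by omega⟩ : Fin (2*n+1))).val:ℤ) + 2)) •
          (γ (2*n+1) q c k * γ (2*n+1) q c (dual k))) with hSgdef
    have hSgK : Sg ∈ Kmod q c (n := n) m := by
      rw [hSgdef]
      refine Submodule.sum_mem _ fun k hk => Submodule.smul_mem _ _ ?_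
      exact Kmod_mem_basic q c k _ (by simpa [Finset.mem_Iio, Fin.lt_def] using hk)
    set κ := c^2 * q ^ (((2*n+1:ℕ):ℤ) - 2*(((⟨m, by omega⟩ : Fin (2*n+1))).val:ℤ) - 1) * (q + q⁻¹) with hκdef
    have hκ : β * κ = betaC n q c (m+1) := by
      have hz : (((2*n+1:ℕ):ℤ) - 2*(((⟨m, by omega⟩ : Fin (2*n+1))).val:ℤ) - 1) = ((2*(n-m) : ℕ) : ℤ) := by
        show ((2*n+1:ℕ):ℤ) - 2*(m:ℤ) - 1 = ((2*(n-m) : ℕ) : ℤ)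
        omega
      rw [hκdef, hz, zpow_natCast]
      rfl
    have expand : gdm * (algebraMap ℂ (Cl (2*n+1) q c) β + j) * gm
        = β • (gdm * gm) + gdm * j * gm := by
      rw [mul_add, add_mul, ← Algebra.commutes β gdm, mul_assoc (algebraMap ℂ _ β),
        ← Algebra.smul_def]
    rw [expand, hpair]
    have hfinal : β • (-(gm * gdm) + (q^2 - q⁻¹^2) • Sg + algebraMap ℂ (Cl (2*n+1) q c) κ)
        + gdm * j * gm - algebraMap ℂ (Cl (2*n+1) q c) (betaC n q c (m+1))
        = β • (-(gm * gdm)) + β • ((q^2 - q⁻¹^2) • Sg) + gdm * j * gm := by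
      have halg : β • (algebraMap ℂ (Cl (2*n+1) q c) κ)
          = algebraMap ℂ (Cl (2*n+1) q c) (betaC n q c (m+1)) := by
        rw [Algebra.smul_def, ← map_mul, hκ]
      rw [smul_add, smul_add, halg]
      abel
    rw [hfinal]
    refine Submodule.add_mem _ (Submodule.add_mem _ ?_ ?_) ?_
    · exact Submodule.smul_mem _ _ (Submodule.neg_mem _
        (Kmod_mem_basic q c ⟨m, by omega⟩ gdm (by simp)))
    · exact Submodule.smul_mem _ _ (Submodule.smul_mem _ _
        (Kmod_mono q c (Nat.le_succ m) hSgK))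
    · exact Kmod_mul_right q c (Kmod_mono q c (Nat.le_succ m)
        (Kmod_dual_mul q c (le_of_lt hmn) ihm)) gm

-- stage 5: main identities
theorem betaC_closed (m : ℕ) (hm : m ≤ n) :
    betaC n q c m = c^(2*m) * (q+q⁻¹)^m * q^(m*(2*n+1-m)) := by
  induction m with
  | zero => simp [betaC]
  | succ m ih =>
    have hmn : m < n := hm
    have key : m*(2*n+1-m) + 2*(n-m) = (m+1)*(2*n+1-(m+1)) := by
      obtain ⟨a, rfl⟩ : ∃ a, n = m+1+a := ⟨n-(m+1), by omega⟩
      have h1 : 2*(m+1+a)+1-m = m+2*a+3 := by omega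
      have h2 : (m+1+a)-m = a+1 := by omega
      have h3 : 2*(m+1+a)+1-(m+1) = m+2*a+2 := by omega
      rw [h1, h2, h3]; ring
    rw [betaC, ih (le_of_lt hmn), ← key, pow_add]
    ring

theorem rho_mul_psi (hn : 1 ≤ n) (η : ℂ) (hη2 : η*η = 1) :
    rhoOdd n q c η * psiOdd n q c η = (2*η*c*betaC n q c n) • psiOdd n q c η := by
  have hj : prodFrom (2*n+1) q c (2*n+1-n) * prodFirst (2*n+1) q c n
      - algebraMap ℂ (Cl (2*n+1) q c) (betaC n q c n) ∈ Kmod q c (n := n) n := lemD q c n le_rfl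
  set E := prodFrom (2*n+1) q c (2*n+1-n) with hE
  set P := prodFirst (2*n+1) q c n with hP
  set X := algebraMap ℂ (Cl (2*n+1) q c) (η*c) + γ (2*n+1) q c ⟨n, by omega⟩ with hX
  set β := betaC n q c n with hβ
  set j := E*P - algebraMap ℂ (Cl (2*n+1) q c) β with hjd
  have hEP : E * P = algebraMap ℂ (Cl (2*n+1) q c) β + j := by rw [hjd]; abel
  have hpsi : psiOdd n q c η = P * X := rfl
  have hrho : rhoOdd n q c η = (P * X) * E := by
    rw [rhoOdd, hE, show 2*n+1-n = n+1 from by omega, hpsi]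
  rw [hrho, ← hpsi, mul_assoc]
  have e1 : E * psiOdd n q c η = (algebraMap ℂ (Cl (2*n+1) q c) β + j) * X := by
    rw [hpsi, ← mul_assoc, hEP]
  rw [e1, add_mul, mul_add]
  have e2 : psiOdd n q c η * (algebraMap ℂ (Cl (2*n+1) q c) β * X) = β • ((2*η*c) • psiOdd n q c η) := by
    rw [← Algebra.smul_def, mul_smul_comm, hX, psi_mul_X q c hn η hη2]
  have e3 : psiOdd n q c η * (j * X) = 0 :=
    psi_mul_Kmod q c hn η (Kmod_mul_right q c hj X)
  rw [e2, e3, add_zero, smul_smul]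
  congr 1
  ring

-- stage 6: representation infrastructure
section Rep
variable {n : ℕ} (q c η : ℂ)

abbrev VS (n : ℕ) := (Fin n → Bool) → ℂ

def mcount {n : ℕ} (k : ℕ) (S : Fin n → Bool) : ℕ :=
  ∑ l : Fin n, if l.val < k ∧ S l then 1 else 0

theorem mcount_update {n : ℕ} (k : ℕ) (S : Fin n → Bool) (j : Fin n) (b : Bool) :
    mcount k (Function.update S j b) + (if j.val < k ∧ S j then 1 else 0)
      = mcount k S + (if j.val < k ∧ b then 1 else 0) := by
  unfold mcount
  rw [← Finset.sum_erase_add _ _ (Finset.mem_univ j), ← Finset.sum_erase_add _ _ (Finset.mem_univ j)]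
  have hs : ∀ l ∈ Finset.univ.erase j,
      (if l.val < k ∧ (Function.update S j b) l then (1:ℕ) else 0) = (if l.val < k ∧ S l then 1 else 0) := by
    intro l hl
    rw [Function.update_of_ne (Finset.ne_of_mem_erase hl)]
  rw [Finset.sum_congr rfl hs, Function.update_self]
  ring

theorem mcount_update_ge {n : ℕ} {k : ℕ} (S : Fin n → Bool) {j : Fin n} (hj : k ≤ j.val) (b : Bool) :
    mcount k (Function.update S j b) = mcount k S := by
  have := mcount_update k S j b
  have hc : ¬ (j.val < k) := by omega
  simpa [hc] using this

theorem mcount_update_true {n : ℕ} {k : ℕ} (S : Fin n → Bool) {j : Fin n} (hj : j.val < k)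
    (hS : S j = false) : mcount k (Function.update S j true) = mcount k S + 1 := by
  have := mcount_update k S j true
  simpa [hj, hS] using this

theorem mcount_update_false {n : ℕ} {k : ℕ} (S : Fin n → Bool) {j : Fin n} (hj : j.val < k)
    (hS : S j = true) : mcount k S = mcount k (Function.update S j false) + 1 := by
  have := mcount_update k S j false
  have : mcount k (Function.update S j false) + 1 = mcount k S := by simpa [hj, hS] using this
  omega

def aF {n : ℕ} (q : ℂ) (k : Fin n) (v : VS n) : VS n := fun S =>
  if S k then (-q^2)^(mcount k.val S) * v (Function.update S k false) else 0

def bF {n : ℕ} (q c : ℂ) (k : Fin n) (v : VS n) : VS n := fun S =>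
  if S k then 0 else
    (c^2*(q+q⁻¹)*q^(2*(n-k.val)) * (-q^2)^(mcount k.val S)) * v (Function.update S k true)

def mF {n : ℕ} (q c η : ℂ) (v : VS n) : VS n := fun S =>
  η * c * (-1)^(mcount n S) * q^(2*(mcount n S)) * v S

def aL {n : ℕ} (q : ℂ) (k : Fin n) : VS n →ₗ[ℂ] VS n where
  toFun := aF q k
  map_add' v w := by funext S; simp only [aF, Pi.add_apply]; split <;> ring
  map_smul' t v := by funext S; simp only [aF, Pi.smul_apply, RingHom.id_apply, smul_eq_mul]; split <;> ring

def bL {n : ℕ} (q c : ℂ) (k : Fin n) : VS n →ₗ[ℂ] VS n where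
  toFun := bF q c k
  map_add' v w := by funext S; simp only [bF, Pi.add_apply]; split <;> ring
  map_smul' t v := by funext S; simp only [bF, Pi.smul_apply, RingHom.id_apply, smul_eq_mul]; split <;> ring

def mL {n : ℕ} (q c η : ℂ) : VS n →ₗ[ℂ] VS n where
  toFun := mF q c η
  map_add' v w := by funext S; simp only [mF, Pi.add_apply]; ring
  map_smul' t v := by funext S; simp only [mF, Pi.smul_apply, RingHom.id_apply, smul_eq_mul]; ring

def opL (n : ℕ) (q c η : ℂ) (i : Fin (2*n+1)) : VS n →ₗ[ℂ] VS n :=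
  if h : i.val < n then aL q ⟨i.val, h⟩
  else if h2 : i.val = n then mL q c η
  else bL q c ⟨2*n - i.val, by omega⟩

end Rep

-- stage 7a: operator relation lemmas
section Rep2
variable {n : ℕ} (q c η : ℂ)

theorem aL_apply (k : Fin n) (v : VS n) : aL q k v = aF q k v := rfl
theorem bL_apply (k : Fin n) (v : VS n) : bL q c k v = bF q c k v := rfl
theorem mL_apply (v : VS n) : mL q c η v = mF q c η v := rfl

theorem aL_sq (k : Fin n) : (aL q k * aL q k : Module.End ℂ (VS n)) = 0 := by
  apply LinearMap.ext; intro v; funext S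
  simp only [Module.End.mul_apply, aL_apply, aF, LinearMap.zero_apply, Pi.zero_apply]
  by_cases h : S k
  · simp [h, Function.update_self]
  · simp [h]

theorem bL_sq (k : Fin n) : (bL q c k * bL q c k : Module.End ℂ (VS n)) = 0 := by
  apply LinearMap.ext; intro v; funext S
  simp only [Module.End.mul_apply, bL_apply, bF, LinearMap.zero_apply, Pi.zero_apply]
  by_cases h : S k
  · simp [h]
  · simp [h, Function.update_self]

theorem aa_swapE {k1 k2 : Fin n} (h : k1 < k2) :
    (aL q k2 * aL q k1 : Module.End ℂ (VS n)) = (-(q^2)) • (aL q k1 * aL q k2) := by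
  have hne : k1 ≠ k2 := ne_of_lt h
  have hv : k1.val < k2.val := h
  apply LinearMap.ext; intro v; funext S
  simp only [Module.End.mul_apply, LinearMap.smul_apply, aL_apply, aF, Pi.smul_apply,
    smul_eq_mul, Function.update_of_ne hne, Function.update_of_ne hne.symm]
  by_cases h1 : S k1 <;> by_cases h2 : S k2 <;> simp only [h1, h2, if_true, if_false,
    Bool.false_eq_true, mul_zero, zero_mul, neg_zero]
  rw [Function.update_comm hne, mcount_update_ge S (le_of_lt hv),
    mcount_update_false S hv h1, pow_succ]
  ring

theorem bb_swapE {k1 k2 : Fin n} (h : k1 < k2) :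
    (bL q c k1 * bL q c k2 : Module.End ℂ (VS n)) = (-(q^2)) • (bL q c k2 * bL q c k1) := by
  have hne : k1 ≠ k2 := ne_of_lt h
  have hv : k1.val < k2.val := h
  apply LinearMap.ext; intro v; funext S
  simp only [Module.End.mul_apply, LinearMap.smul_apply, bL_apply, bF, Pi.smul_apply,
    smul_eq_mul, Function.update_of_ne hne, Function.update_of_ne hne.symm]
  by_cases h1 : S k1 <;> by_cases h2 : S k2 <;> simp only [h1, h2, if_true, if_false,
    Bool.false_eq_true, mul_zero, zero_mul, neg_zero]
  have hf1 : S k1 = false := by simpa using h1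
  rw [Function.update_comm hne, mcount_update_ge S (le_of_lt hv),
    mcount_update_true S hv hf1, pow_succ]
  ring

theorem ab_swapE {k1 k2 : Fin n} (hne : k1 ≠ k2) :
    (bL q c k2 * aL q k1 : Module.End ℂ (VS n)) = (-(q^2)) • (aL q k1 * bL q c k2) := by
  apply LinearMap.ext; intro v; funext S
  simp only [Module.End.mul_apply, LinearMap.smul_apply, aL_apply, bL_apply, aF, bF,
    Pi.smul_apply, smul_eq_mul, Function.update_of_ne hne, Function.update_of_ne hne.symm]
  by_cases h1 : S k1 <;> by_cases h2 : S k2 <;> simp only [h1, h2, if_true, if_false,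
    Bool.false_eq_true, mul_zero, zero_mul, neg_zero]
  have hf2 : S k2 = false := by simpa using h2
  rw [Function.update_comm hne]
  rcases lt_or_gt_of_ne (fun hc : k1.val = k2.val => hne (Fin.ext hc)) with hv | hv
  · rw [mcount_update_ge S (le_of_lt hv) true, mcount_update_false S hv h1, pow_succ]
    ring
  · rw [mcount_update_ge S (le_of_lt hv) false, mcount_update_true S hv hf2, pow_succ]
    ring

theorem am_swapE (k : Fin n) :
    (mL q c η * aL q k : Module.End ℂ (VS n)) = (-(q^2)) • (aL q k * mL q c η) := by
  apply LinearMap.ext; intro v; funext S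
  simp only [Module.End.mul_apply, LinearMap.smul_apply, aL_apply, mL_apply, aF, mF,
    Pi.smul_apply, smul_eq_mul]
  by_cases h1 : S k
  · simp only [h1, if_true]
    rw [mcount_update_false S k.2 h1]
    ring
  · simp [h1]

theorem mb_swapE (k : Fin n) :
    (bL q c k * mL q c η : Module.End ℂ (VS n)) = (-(q^2)) • (mL q c η * bL q c k) := by
  apply LinearMap.ext; intro v; funext S
  simp only [Module.End.mul_apply, LinearMap.smul_apply, mL_apply, bL_apply, mF, bF,
    Pi.smul_apply, smul_eq_mul]
  by_cases h1 : S k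
  · simp [h1]
  · simp only [h1, if_true, if_false, Bool.false_eq_true, mul_zero, zero_mul, neg_zero]
    have hf1 : S k = false := by simpa using h1
    rw [mcount_update_true S k.2 hf1]
    ring

theorem ab_diag (k : Fin n) (v : VS n) (S : Fin n → Bool) :
    (aL q k * bL q c k : Module.End ℂ (VS n)) v S
      = (if S k then c^2*(q+q⁻¹)*q^(2*(n-k.val))*q^(4*mcount k.val S) else 0) * v S := by
  simp only [Module.End.mul_apply, aL_apply, bL_apply, aF, bF]
  by_cases h1 : S k
  · have e1 : Function.update (Function.update S k false) k true = S := by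
      rw [Function.update_idem]
      exact Function.update_eq_self_iff.mpr h1.symm
    simp only [h1, if_true, Function.update_self, if_false, Bool.true_eq_false,
      Bool.false_eq_true, e1, mcount_update_ge S (le_refl k.val) false]
    have hpow : ((-q^2):ℂ)^(mcount k.val S) * ((-q^2):ℂ)^(mcount k.val S) = q^(4*mcount k.val S) := by
      rw [← mul_pow, show ((-q^2):ℂ) * (-q^2) = q^4 from by ring, ← pow_mul]
    rw [← hpow]
    ring
  · simp [h1]

theorem ba_diag (k : Fin n) (v : VS n) (S : Fin n → Bool) :
    (bL q c k * aL q k : Module.End ℂ (VS n)) v S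
      = (if S k then 0 else c^2*(q+q⁻¹)*q^(2*(n-k.val))*q^(4*mcount k.val S)) * v S := by
  simp only [Module.End.mul_apply, aL_apply, bL_apply, aF, bF]
  by_cases h1 : S k
  · simp [h1]
  · have hf1 : S k = false := by simpa using h1
    have e1 : Function.update (Function.update S k true) k false = S := by
      rw [Function.update_idem]
      exact Function.update_eq_self_iff.mpr hf1.symm
    simp only [h1, if_true, if_false, Function.update_self, Bool.false_eq_true,
      Bool.true_eq_false, e1, mcount_update_ge S (le_refl k.val) true]
    have hpow : ((-q^2):ℂ)^(mcount k.val S) * ((-q^2):ℂ)^(mcount k.val S) = q^(4*mcount k.val S) := by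
      rw [← mul_pow, show ((-q^2):ℂ) * (-q^2) = q^4 from by ring, ← pow_mul]
    rw [← hpow]
    ring

theorem mm_diag (v : VS n) (S : Fin n → Bool) :
    (mL q c η * mL q c η : Module.End ℂ (VS n)) v S
      = (η*η) * (c^2*q^(4*mcount n S)) * v S := by
  simp only [Module.End.mul_apply, mL_apply, mF]
  have hpow : ((-1:ℂ))^(mcount n S) * ((-1:ℂ))^(mcount n S) * (q^(2*mcount n S) * q^(2*mcount n S))
      = q^(4*mcount n S) := by
    rw [← mul_pow, ← pow_add, show ((-1:ℂ)) * (-1) = 1 from by ring, one_pow, one_mul]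
    congr 1
    ring
  calc η * c * (-1:ℂ)^(mcount n S) * q^(2*mcount n S) *
        (η * c * (-1:ℂ)^(mcount n S) * q^(2*mcount n S) * v S)
      = ((-1:ℂ)^(mcount n S) * (-1:ℂ)^(mcount n S) * (q^(2*mcount n S) * q^(2*mcount n S)))
        * ((η*η) * c^2 * v S) := by ring
    _ = (η*η) * (c^2*q^(4*mcount n S)) * v S := by rw [hpow]; ring

end Rep2

-- stage 7b: scalar machinery
section Rep3
variable {n : ℕ} (q c η : ℂ)

def SSf {n : ℕ} (S : Fin n → Bool) (l : ℕ) : Bool := if h : l < n then S ⟨l, h⟩ else false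

theorem mcount_zero {n : ℕ} (S : Fin n → Bool) : mcount 0 S = 0 := by simp [mcount]

theorem mcount_succ {n : ℕ} (k : ℕ) (S : Fin n → Bool) :
    mcount (k+1) S = mcount k S + (if SSf S k then 1 else 0) := by
  by_cases hk : k < n
  · have key : ∀ l : Fin n, (if l.val < k+1 ∧ S l then (1:ℕ) else 0)
        = (if l.val < k ∧ S l then 1 else 0) + (if l = (⟨k, hk⟩ : Fin n) then (if S l then 1 else 0) else 0) := by
      intro l
      by_cases h3 : l = (⟨k, hk⟩ : Fin n)
      · subst h3
        simp only [if_pos rfl]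
        by_cases h1 : S ⟨k, hk⟩ <;> simp [h1]
      · have hvne : l.val ≠ k := fun hc => h3 (Fin.ext hc)
        by_cases h1 : S l <;> by_cases h2 : l.val < k
        · simp [h1, h2, h3, show l.val < k+1 from by omega]
        · simp [h1, h2, h3, show ¬(l.val < k+1) from by omega]
        · simp [h1, h3]
        · simp [h1, h3]
    unfold mcount
    rw [Finset.sum_congr rfl (fun l _ => key l), Finset.sum_add_distrib,
      Finset.sum_ite_eq' Finset.univ (⟨k, hk⟩ : Fin n) (fun l => if S l then (1:ℕ) else 0)]
    simp only [Finset.mem_univ, if_true, SSf, dif_pos hk]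
  · have h1 : ∀ l : Fin n, (l.val < k+1 ∧ S l) ↔ (l.val < k ∧ S l) := by
      intro l
      have := l.2
      constructor <;> (rintro ⟨hl, hs⟩; exact ⟨by omega, hs⟩)
    have h2 : SSf S k = false := by simp [SSf, hk]
    unfold mcount
    rw [h2]
    simp only [if_false, add_zero, Bool.false_eq_true]
    exact Finset.sum_congr rfl (fun l _ => by rw [if_congr (h1 l) rfl rfl])

theorem Hkey (S : Fin n → Bool) : ∀ k,
    (q^4 - 1) * (∑ j ∈ Finset.range k, if SSf S j then q^(4*mcount j S) else 0) + 1
      = q^(4*mcount k S) := by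
  intro k
  induction k with
  | zero => simp [mcount_zero]
  | succ k ih =>
    rw [Finset.sum_range_succ, mcount_succ k S]
    by_cases h1 : SSf S k
    · rw [if_pos h1, if_pos h1, mul_add]
      have : (q^4-1) * (∑ j ∈ Finset.range k, if SSf S j then q^(4*mcount j S) else 0)
          = q^(4*mcount k S) - 1 := by rw [← ih]; ring
      rw [this]
      have : 4*(mcount k S + 1) = 4*mcount k S + 4 := by ring
      rw [this, pow_add]
      ring
    · rw [if_neg h1, if_neg h1, add_zero, add_zero, ih]

theorem finIio_sum {N : ℕ} (i : Fin N) (g : ℕ → ℂ) :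
    ∑ l ∈ Finset.Iio i, g l.val = ∑ j ∈ Finset.range i.val, g j := by
  apply Finset.sum_nbij' (i := fun (l : Fin N) => l.val)
    (j := fun (j : ℕ) => (⟨j % N, Nat.mod_lt _ i.pos⟩ : Fin N))
  · intro a ha
    simp only [Finset.mem_Iio, Fin.lt_def] at ha
    simpa [Finset.mem_range] using ha
  · intro a ha
    simp only [Finset.mem_range] at ha
    have haN : a < N := lt_trans ha i.2
    simp only [Finset.mem_Iio, Fin.lt_def, Nat.mod_eq_of_lt haN]
    exact ha
  · intro a ha
    simp only [Finset.mem_Iio, Fin.lt_def] at ha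
    apply Fin.ext
    simp [Nat.mod_eq_of_lt (lt_trans ha i.2)]
  · intro a ha
    simp only [Finset.mem_range] at ha
    simp [Nat.mod_eq_of_lt (lt_trans ha i.2)]
  · intro a ha
    rfl

theorem sum_eval (hq : q ≠ 0) (i : Fin (2*n+1)) (hi : i.val ≤ n) (S : Fin n → Bool) :
    (∑ l ∈ Finset.Iio i, q^(2*(l.val:ℤ)-2*(i.val:ℤ)+2) *
      (if SSf S l.val then c^2*(q+q⁻¹)*q^(2*(n-l.val))*q^(4*mcount l.val S) else 0))
    = c^2*(q+q⁻¹)*q^(2*(n-i.val))*q^2 *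
      (∑ j ∈ Finset.range i.val, if SSf S j then q^(4*mcount j S) else 0) := by
  have hconv := finIio_sum i (fun j => q^(2*(j:ℤ)-2*(i.val:ℤ)+2) *
      (if SSf S j then c^2*(q+q⁻¹)*q^(2*(n-j))*q^(4*mcount j S) else 0))
  rw [hconv]
  have zkey : ∀ j : ℕ, j < i.val →
      q^(2*(j:ℤ)-2*(i.val:ℤ)+2) * (c^2*(q+q⁻¹)*q^(2*(n-j))*q^(4*mcount j S))
        = (c^2*(q+q⁻¹)*q^(2*(n-i.val))*q^2) * q^(4*mcount j S) := by
    intro j hj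
    have hz : q^(2*(j:ℤ)-2*(i.val:ℤ)+2) * q^(2*(n-j)) = q^(2*(n-i.val)) * q^2 := by
      rw [← zpow_natCast q (2*(n-j)), ← zpow_natCast q (2*(n-i.val)), ← zpow_natCast q 2,
        ← zpow_add₀ hq, ← zpow_add₀ hq]
      congr 1
      have h1 : ((2*(n-j):ℕ):ℤ) = 2*(n:ℤ)-2*(j:ℤ) := by omega
      have h2 : ((2*(n-i.val):ℕ):ℤ) = 2*(n:ℤ)-2*(i.val:ℤ) := by omega
      rw [h1, h2]
      push_cast
      ring
    calc q^(2*(j:ℤ)-2*(i.val:ℤ)+2) * (c^2*(q+q⁻¹)*q^(2*(n-j))*q^(4*mcount j S))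
        = (q^(2*(j:ℤ)-2*(i.val:ℤ)+2) * q^(2*(n-j))) * (c^2*(q+q⁻¹)*q^(4*mcount j S)) := by ring
      _ = (q^(2*(n-i.val)) * q^2) * (c^2*(q+q⁻¹)*q^(4*mcount j S)) := by rw [hz]
      _ = (c^2*(q+q⁻¹)*q^(2*(n-i.val))*q^2) * q^(4*mcount j S) := by ring
  have hcong : ∀ j ∈ Finset.range i.val,
      q^(2*(j:ℤ)-2*(i.val:ℤ)+2) * (if SSf S j then c^2*(q+q⁻¹)*q^(2*(n-j))*q^(4*mcount j S) else 0)
        = (c^2*(q+q⁻¹)*q^(2*(n-i.val))*q^2) * (if SSf S j then q^(4*mcount j S) else 0) := by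
    intro j hj
    by_cases h1 : SSf S j
    · rw [if_pos h1, if_pos h1, zkey j (Finset.mem_range.mp hj)]
    · rw [if_neg h1, if_neg h1, mul_zero, mul_zero]
  rw [Finset.sum_congr rfl hcong, ← Finset.mul_sum]

end Rep3

-- stage 7c: the representation
section RepBuild
variable {n : ℕ} (q c η : ℂ)

theorem opL_lt (i : Fin (2*n+1)) (h : i.val < n) : opL n q c η i = aL q ⟨i.val, h⟩ := dif_pos h

theorem opL_mid (i : Fin (2*n+1)) (h : i.val = n) : opL n q c η i = mL q c η := by
  rw [opL, dif_neg (by omega), dif_pos h]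

theorem opL_gt (i : Fin (2*n+1)) (h : n < i.val) :
    opL n q c η i = bL q c ⟨2*n - i.val, by omega⟩ := by
  rw [opL, dif_neg (by omega), dif_neg (by omega)]

def repF : FreeAlgebra ℂ (Fin (2*n+1)) →ₐ[ℂ] Module.End ℂ (VS n) :=
  FreeAlgebra.lift ℂ (opL n q c η)

theorem repF_gen (i : Fin (2*n+1)) : repF q c η (gen i) = opL n q c η i := by
  rw [repF, gen, FreeAlgebra.lift_ι_apply]

theorem repF_pairSum (i : Fin (2*n+1)) (hi : i.val ≤ n) (v : VS n) (S : Fin n → Bool) :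
    (repF q c η (pairSum (2*n+1) q i)) v S
      = (∑ l ∈ Finset.Iio i, q^(2*(l.val:ℤ)-2*(i.val:ℤ)+2) *
          (if SSf S l.val then c^2*(q+q⁻¹)*q^(2*(n-l.val))*q^(4*mcount l.val S) else 0)) * v S := by
  rw [pairSum, map_sum]
  rw [LinearMap.sum_apply, Finset.sum_apply, Finset.sum_mul]
  refine Finset.sum_congr rfl fun l hl => ?_
  have hlv : l.val < i.val := by have h' := Finset.mem_Iio.mp hl; exact h'
  have hln : l.val < n := by omega
  have hdl : n < (dual l).val := by
    show n < 2*n+1-1-l.val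
    omega
  rw [map_smul, map_mul, repF_gen, repF_gen, opL_lt q c η l hln, opL_gt q c η (dual l) hdl]
  have hidx : (⟨2*n - (dual l).val, by omega⟩ : Fin n) = ⟨l.val, hln⟩ := by
    apply Fin.ext
    show 2*n - (2*n+1-1-l.val) = l.val
    omega
  rw [hidx]
  rw [LinearMap.smul_apply, Pi.smul_apply, smul_eq_mul, ab_diag]
  have hcond : S ⟨l.val, hln⟩ = SSf S l.val := by simp [SSf, hln]
  rw [hcond]
  ring

theorem repF_rel (hq : q ≠ 0) (hη2 : η*η = 1) :
    ∀ ⦃x y⦄, Rel (2*n+1) q c x y → repF q c η (n := n) x = repF q c η y := by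
  intro x y r
  induction r with
  | sq i h =>
    rw [map_mul, map_zero, repF_gen]
    rcases Nat.lt_or_ge i.val n with hlt | hge
    · rw [opL_lt q c η i hlt]; exact aL_sq q _
    · have hgt : n < i.val := by omega
      rw [opL_gt q c η i hgt]; exact bL_sq q c _
  | swap i j hlt h =>
    rw [map_mul, map_smul, map_mul, repF_gen, repF_gen]
    have hij : i.val < j.val := hlt
    rcases Nat.lt_or_ge j.val n with hjn | hjge
    · rw [opL_lt q c η i (by omega), opL_lt q c η j hjn]
      exact aa_swapE q (show (⟨i.val, by omega⟩ : Fin n) < ⟨j.val, hjn⟩ from hij)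
    · rcases Nat.lt_or_ge i.val n with hin | hige
      · rcases Nat.lt_or_ge n j.val with hjgt | hjle
        · -- i < n < j : aL i, bL (2n-j)
          rw [opL_lt q c η i hin, opL_gt q c η j hjgt]
          refine ab_swapE q c (fun hc => ?_)
          have : i.val = 2*n - j.val := congrArg Fin.val hc
          omega
        · -- j = n
          have hje : j.val = n := by omega
          rw [opL_lt q c η i hin, opL_mid q c η j hje]
          exact am_swapE q c η _
      · rcases Nat.lt_or_ge n i.val with higt | hile
        · -- n < i < j : bL (2n-j) * bL (2n-i), with 2n-j < 2n-i
          rw [opL_gt q c η i higt, opL_gt q c η j (by omega)]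
          exact bb_swapE q c (show (⟨2*n - j.val, by omega⟩ : Fin n) < ⟨2*n - i.val, by omega⟩ from by
            simp only [Fin.lt_def]
            show 2*n - j.val < 2*n - i.val
            omega)
        · -- i = n < j
          have hie : i.val = n := by omega
          rw [opL_mid q c η i hie, opL_gt q c η j (by omega)]
          exact mb_swapE q c η _
  | pair i h =>
    have hin : i.val < n := by omega
    have hdi : n < (dual i).val := by
      show n < 2*n+1-1-i.val
      omega
    have hidx : (⟨2*n - (dual i).val, by omega⟩ : Fin n) = ⟨i.val, hin⟩ := by
      apply Fin.ext
      show 2*n - (2*n+1-1-i.val) = i.val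
      omega
    apply LinearMap.ext; intro v; funext S
    rw [map_mul, map_add, map_add, map_neg, map_mul, map_smul, AlgHom.commutes,
      repF_gen, repF_gen, opL_lt q c η i hin, opL_gt q c η (dual i) hdi, hidx]
    simp only [LinearMap.add_apply, LinearMap.neg_apply, LinearMap.smul_apply,
      Pi.add_apply, Pi.neg_apply, Pi.smul_apply, smul_eq_mul,
      Module.algebraMap_end_apply]
    rw [ba_diag, ab_diag, repF_pairSum q c η i (le_of_lt hin) v S,
      sum_eval q c hq i (le_of_lt hin) S]
    have hcond : S ⟨i.val, hin⟩ = SSf S i.val := by simp [SSf, hin]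
    rw [hcond]
    have hzz : (q:ℂ)^(((2*n+1:ℕ):ℤ) - 2*(i.val:ℤ) - 1) = q^(2*(n-i.val)) := by
      rw [← zpow_natCast q (2*(n-i.val))]
      congr 1
      omega
    rw [hzz]
    set m := mcount i.val S
    set S0 := (∑ j ∈ Finset.range i.val, if SSf S j then q^(4*mcount j S) else 0) with hS0
    have hH : (q^4 - 1) * S0 + 1 = q^(4*m) := Hkey q S i.val
    have hq2 : q⁻¹ * q = 1 := inv_mul_cancel₀ hq
    have e : ((q:ℂ)^2 - q⁻¹^2)*q^2 = q^4 - 1 := by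
      have e0 : ((q:ℂ)^2 - q⁻¹^2)*q^2 = q^4 - (q⁻¹*q)^2 := by ring
      rw [e0, hq2, one_pow]
    by_cases hS : SSf S i.val
    · simp only [hS, if_true, zero_mul, neg_zero]
      linear_combination (-(c^2*(q+q⁻¹)*q^(2*(n-i.val))*(v S))) * hH
        - (c^2*(q+q⁻¹)*q^(2*(n-i.val))*S0*(v S)) * e
    · simp only [hS, if_false, Bool.false_eq_true, zero_mul, neg_zero, mul_zero]
      linear_combination (-(c^2*(q+q⁻¹)*q^(2*(n-i.val))*(v S))) * hH
        - (c^2*(q+q⁻¹)*q^(2*(n-i.val))*S0*(v S)) * e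
  | middle i h =>
    have hie : i.val = n := by omega
    apply LinearMap.ext; intro v; funext S
    rw [map_mul, map_add, map_smul, AlgHom.commutes, repF_gen, opL_mid q c η i hie]
    simp only [LinearMap.add_apply, LinearMap.smul_apply, Pi.add_apply, Pi.smul_apply,
      smul_eq_mul, Module.algebraMap_end_apply]
    rw [mm_diag, repF_pairSum q c η i (le_of_eq hie) v S, sum_eval q c hq i (le_of_eq hie) S, hie]
    have hq2 : q⁻¹ * q = 1 := inv_mul_cancel₀ hq
    have e2 : ((q:ℂ) - q⁻¹)*(q+q⁻¹)*q^2 = q^4 - 1 := by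
      have e0 : ((q:ℂ) - q⁻¹)*(q+q⁻¹)*q^2 = q^4 - (q⁻¹*q)^2 := by ring
      rw [e0, hq2, one_pow]
    have hH : (q^4 - 1) * (∑ j ∈ Finset.range n, if SSf S j then q^(4*mcount j S) else 0) + 1
        = q^(4*mcount n S) := Hkey q S n
    have hsub : n - n = 0 := Nat.sub_self n
    rw [hsub]
    linear_combination (-(c^2*(v S))) * hH
      - (c^2*(∑ j ∈ Finset.range n, if SSf S j then q^(4*mcount j S) else 0)*(v S)) * e2
      + (c^2*q^(4*mcount n S)*(v S)) * hη2

end RepBuild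

-- stage 7d: rep on Cl and nonvanishing of psi
section RepFinal
variable {n : ℕ} (q c η : ℂ)

def repA (hq : q ≠ 0) (hη2 : η*η = 1) : Cl (2*n+1) q c →ₐ[ℂ] Module.End ℂ (VS n) :=
  RingQuot.liftAlgHom ℂ ⟨repF q c η, fun _ _ r => repF_rel q c η hq hη2 r⟩

theorem repA_γ (hq : q ≠ 0) (hη2 : η*η = 1) (i : Fin (2*n+1)) :
    repA q c η hq hη2 (γ (2*n+1) q c i) = opL n q c η i := by
  rw [γ, repA, RingQuot.liftAlgHom_mkAlgHom_apply, repF_gen]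

def fullFrom (n m : ℕ) : Fin n → Bool := fun l => decide (m ≤ l.val)

theorem fullFrom_mem {m : ℕ} (hm : m < n) : fullFrom n m ⟨m, hm⟩ = true := by
  simp [fullFrom]

theorem fullFrom_update {m : ℕ} (hm : m < n) :
    Function.update (fullFrom n m) ⟨m, hm⟩ false = fullFrom n (m+1) := by
  funext l
  by_cases hl : l = (⟨m, hm⟩ : Fin n)
  · subst hl
    rw [Function.update_self]
    simp [fullFrom]
  · rw [Function.update_of_ne hl]
    have hv : l.val ≠ m := fun hc => hl (Fin.ext hc)
    have : (m ≤ l.val) = (m+1 ≤ l.val) := by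
      apply propext
      omega
    simp only [fullFrom, this]

theorem fullFrom_mcount {m : ℕ} (hm : m ≤ n) : mcount m (fullFrom n m) = 0 := by
  unfold mcount
  apply Finset.sum_eq_zero
  intro l _
  have hcond : ¬(l.val < m ∧ fullFrom n m l = true) := by
    rintro ⟨h4, h5⟩
    simp only [fullFrom, decide_eq_true_eq] at h5
    omega
  simp [hcond]

theorem repA_prodFirst (hq : q ≠ 0) (hη2 : η*η = 1) (m : ℕ) (hm : m ≤ n) : ∀ v : VS n,
    (repA q c η hq hη2 (prodFirst (2*n+1) q c m)) v (fullFrom n 0) = v (fullFrom n m) := by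
  induction m with
  | zero =>
    intro v
    have h1 : prodFirst (2*n+1) q c 0 = 1 := by simp [prodFirst]
    rw [h1, map_one]
    rfl
  | succ m ih =>
    intro v
    rw [prodFirst_succ q c m (by omega), map_mul, Module.End.mul_apply,
      ih (by omega)]
    rw [repA_γ q c η hq hη2, opL_lt q c η _ (show m < n by omega)]
    rw [aL_apply, aF]
    simp only []
    rw [if_pos (fullFrom_mem (show m < n by omega)), fullFrom_mcount (by omega : m ≤ n),
      fullFrom_update (show m < n by omega)]
    simp

theorem psi_ne_zero (hn : 1 ≤ n) (hq : q ≠ 0) (hc : c ≠ 0) (hη0 : η ≠ 0) (hη2 : η*η = 1) :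
    psiOdd n q c η ≠ 0 := by
  intro hzero
  have hone : (repA q c η hq hη2 (psiOdd n q c η)) (fun _ => (1:ℂ)) (fullFrom n 0) = 0 := by
    rw [hzero, map_zero]
    rfl
  rw [psiOdd, map_mul, Module.End.mul_apply, repA_prodFirst q c η hq hη2 n le_rfl _] at hone
  rw [map_add, AlgHom.commutes, repA_γ q c η hq hη2,
    opL_mid q c η ⟨n, by omega⟩ rfl] at hone
  simp only [LinearMap.add_apply, Pi.add_apply, Module.algebraMap_end_apply,
    Pi.smul_apply, smul_eq_mul, mL_apply, mF, fullFrom_mcount (le_refl n)] at hone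
  norm_num at hone
  rcases hone with h3 | h3
  · exact hη0 h3
  · exact hc h3

end RepFinal


/-- `ρ_η ψ_η = 2η c^{2n+1} q^{n(n+1)} (q+q⁻¹)^n ψ_η`, hence
`ρ_η² = 2η c^{2n+1} q^{n(n+1)} (q+q⁻¹)^n ρ_η` and `ρ_η` is not nilpotent. -/
theorem rhoOdd_mul_psiOdd (n : ℕ) (hn : 1 ≤ n) (q c : ℂ)
    (hq : q ≠ 0) (hqr : ∀ m : ℕ, 0 < m → q ^ m ≠ 1) (hc : c ≠ 0)
    (η : ℂ) (hη : η = 1 ∨ η = -1) :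
    rhoOdd n q c η * psiOdd n q c η =
      (2 * η * c ^ (2 * n + 1) * q ^ (n * (n + 1)) * (q + q⁻¹) ^ n) • psiOdd n q c η ∧
    rhoOdd n q c η * rhoOdd n q c η =
      (2 * η * c ^ (2 * n + 1) * q ^ (n * (n + 1)) * (q + q⁻¹) ^ n) • rhoOdd n q c η ∧
    ¬ IsNilpotent (rhoOdd n q c η) := by

  have hη2 : η * η = 1 := by rcases hη with h | h <;> (subst h; norm_num)
  have hη0 : η ≠ 0 := by rcases hη with h | h <;> (subst h; norm_num)
  set lam := 2 * η * c ^ (2 * n + 1) * q ^ (n * (n + 1)) * (q + q⁻¹) ^ n with hlam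
  have hbeta : 2*η*c*betaC n q c n = lam := by
    rw [betaC_closed q c n le_rfl, show 2*n+1-n = n+1 from by omega, hlam]
    ring
  have h1 : rhoOdd n q c η * psiOdd n q c η = lam • psiOdd n q c η := by
    rw [rho_mul_psi q c hn η hη2, hbeta]
  have h2 : rhoOdd n q c η * rhoOdd n q c η = lam • rhoOdd n q c η := by
    calc rhoOdd n q c η * rhoOdd n q c η
        = (rhoOdd n q c η * psiOdd n q c η) * prodFrom (2*n+1) q c (n+1) := by
          rw [rhoOdd, ← mul_assoc]
      _ = lam • rhoOdd n q c η := by rw [h1, smul_mul_assoc, rhoOdd]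
  refine ⟨h1, h2, ?_⟩
  -- lam ≠ 0
  have hqq : q + q⁻¹ ≠ 0 := by
    intro h0
    have hx : q * q + 1 = 0 := by
      have h0' := congrArg (fun z => z * q) h0
      simp only [add_mul, zero_mul] at h0'
      rw [inv_mul_cancel₀ hq] at h0'
      linear_combination h0'
    have h4 : q ^ 4 = 1 := by linear_combination (q*q - 1) * hx
    exact hqr 4 (by norm_num) h4
  have hlam0 : lam ≠ 0 := by
    rw [hlam]
    apply mul_ne_zero
    apply mul_ne_zero
    apply mul_ne_zero
    · exact mul_ne_zero two_ne_zero hη0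
    · exact pow_ne_zero _ hc
    · exact pow_ne_zero _ hq
    · exact pow_ne_zero _ hqq
  have hψ : psiOdd n q c η ≠ 0 := psi_ne_zero q c η hn hq hc hη0 hη2
  -- powers
  have hpow : ∀ k : ℕ, rhoOdd n q c η ^ (k+1) = lam^k • rhoOdd n q c η := by
    intro k
    induction k with
    | zero => simp
    | succ k ih =>
      rw [pow_succ, ih, smul_mul_assoc, h2, smul_smul, ← pow_succ]
  rintro ⟨k, hk⟩
  have hrho0 : rhoOdd n q c η = 0 := by
    cases k with
    | zero =>
      rw [pow_zero] at hk
      have : psiOdd n q c η = 0 := by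
        calc psiOdd n q c η = psiOdd n q c η * 1 := by rw [mul_one]
          _ = 0 := by rw [hk, mul_zero]
      exact absurd this hψ
    | succ k =>
      rw [hpow k] at hk
      rcases smul_eq_zero.mp hk with h3 | h3
      · exact absurd h3 (pow_ne_zero _ hlam0)
      · exact h3
  have : lam • psiOdd n q c η = 0 := by rw [← h1, hrho0, zero_mul]
  rcases smul_eq_zero.mp this with h3 | h3
  · exact hlam0 h3
  · exact hψ h3

end FRT
end
end
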